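/- arXiv:0911.5217 — 6 statements merged into one kernel-verified Lean document; each statement's English description precedes it below -/
import Mathlib

section
/- Let E be a complex Banach space, H : ℝ → B(E) continuous in operator norm, P ∈ B(E) an idempotent (P∘P = P), Q := 1 − P, and t₀ ≤ t. Define the Picard–Dyson terms Uₙ(t,t₀) := (−i)ⁿ ∫_{t₀}^{t} dt₁ ∫_{t₀}^{t₁} dt₂ ⋯ ∫_{t₀}^{t_{n−1}} dtₙ H(t₁)H(t₂)⋯H(tₙ) and U(t,t₀) := 1 + Σ_{n≥1} Uₙ(t,t₀) (this series converges absolutely in operator norm). Define θ_P(s) := Q if s > 0 and θ_P(s) := −P if s ≤ 0, and Cₙ(t,t₀) := (−i)ⁿ ∫_{[t₀,t]ⁿ} H(t₁) θ_P(t₁−t₂) H(t₂) ⋯ θ_P(t_{n−1}−tₙ) H(tₙ) dt₁⋯dtₙ. Assume Σ_{n≥1} ‖Cₙ(t,t₀)‖ < ∞ and set K(t,t₀) := Σ_{n≥1} Cₙ(t,t₀). Then U(t,t₀)P = (P + Q K(t,t₀) P)·(P U(t,t₀) P). -/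
/-! Write `θ_P(r - s) = 1_{s < r} - P` and let `(V g)(r) = ∫_{t₀}^r H(s) g(s) ds`, so that
`Uₙ = (-i)ⁿ (Vⁿ 1)(t)`. Integrating the θ-chain of `C_{n+1}` against `g` over the last time
variable gives `D_{n+1}(g) = Dₙ(V g) - Dₙ(1) P (V g)(t)`, where `Dₙ(g)` is the cube integral of the
chain `H θ_P H ⋯ θ_P H` with `n + 1` factors `H`, times `g` at the last time. Iterating yields the
renewal equation `U_{n+1} = C_{n+1} + ∑_{j<n} C_{j+1} P U_{n-j}`, whose Cauchy-product form is
`K P (U - 1) = (U - 1) - K`; with `P² = P` the factorisation of `U P` is then ring algebra. -/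

open MeasureTheory

/-- Nested (iterated) Bochner integrals:
`nested n f t₀ t = ∫_{t₀}^{t} dt₁ ∫_{t₀}^{t₁} dt₂ ⋯ ∫_{t₀}^{t_{n−1}} dtₙ f(t₁,…,tₙ)`. -/
noncomputable def nested {F : Type*} [NormedAddCommGroup F] [NormedSpace ℝ F] :
    (n : ℕ) → ((Fin n → ℝ) → F) → ℝ → ℝ → F
  | 0, f, _, _ => f Fin.elim0
  | n + 1, f, t₀, t => ∫ s in t₀..t, nested n (fun u => f (Fin.cons s u)) t₀ s

variable {E : Type*} [NormedAddCommGroup E] [NormedSpace ℂ E] [CompleteSpace E]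

/-- The `n`-th Picard–Dyson term
`Uₙ(t,t₀) = (−i)ⁿ ∫_{t₀}^{t} dt₁ ∫_{t₀}^{t₁} dt₂ ⋯ ∫_{t₀}^{t_{n−1}} dtₙ H(t₁)⋯H(tₙ)`. -/
noncomputable def Uterm (H : ℝ → E →L[ℂ] E) (t₀ t : ℝ) (n : ℕ) : E →L[ℂ] E :=
  (-Complex.I) ^ n • nested n (fun u => (List.ofFn fun i => H (u i)).prod) t₀ t

/-- `θ_P(s) = Q = 1 − P` for `s > 0` and `θ_P(s) = −P` for `s ≤ 0`. -/
noncomputable def thetaP (P : E →L[ℂ] E) (s : ℝ) : E →L[ℂ] E :=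
  if 0 < s then 1 - P else -P

/-- `Cₙ(t,t₀) = (−i)ⁿ ∫_{[t₀,t]ⁿ} H(t₁) θ_P(t₁−t₂) H(t₂) ⋯ θ_P(t_{n−1}−tₙ) H(tₙ) dt₁⋯dtₙ`
(a Bochner integral over the cube `[t₀,t]ⁿ`). -/
noncomputable def Cterm (H : ℝ → E →L[ℂ] E) (P : E →L[ℂ] E) (t₀ t : ℝ) (n : ℕ) :
    E →L[ℂ] E :=
  (-Complex.I) ^ n •
    ∫ u in Set.Icc (fun _ : Fin n => t₀) (fun _ => t),
      (List.ofFn fun i : Fin n =>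
        H (u i) * if h : (i : ℕ) + 1 < n then thetaP P (u i - u ⟨(i : ℕ) + 1, h⟩) else 1).prod

open Set

theorem IsIdempotentElem.one_add_mul_eq_of_mul_mul_eq_sub {R : Type*} [Ring R] {P V K : R}
    (hP : IsIdempotentElem P) (hKV : K * (P * V) = V - K) :
    (1 + V) * P = (P + (1 - P) * K * P) * (P * (1 + V) * P) := by
  have hPP (X : R) : P * (P * X) = P * X := by rw [← mul_assoc, hP.eq]
  have hKVP : K * (P * (V * P)) = V * P - K * P := by
    rw [← mul_assoc P, ← mul_assoc, hKV, sub_mul]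
  simp only [mul_add, add_mul, sub_mul, mul_sub, one_mul, mul_one, mul_assoc, hPP, hP.eq, hKVP]
  abel

theorem tsum_mul_tsum_eq_of_renewal {R : Type*} [NormedRing R] [CompleteSpace R] {a b : ℕ → R}
    (p : R) (ha : Summable fun n => ‖a (n + 1)‖) (hb : Summable fun n => ‖b (n + 1)‖)
    (hrenewal : ∀ n, b (n + 1) = a (n + 1) + ∑ j ∈ Finset.range n, a (j + 1) * (p * b (n - j))) :
    (∑' n, a (n + 1)) * (p * ∑' n, b (n + 1)) = ∑' n, b (n + 1) - ∑' n, a (n + 1) := by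
  have hpb : Summable fun n => ‖p * b (n + 1)‖ :=
    (hb.mul_left ‖p‖).of_nonneg_of_le (fun _ => norm_nonneg _) fun _ => norm_mul_le _ _
  have hconv (N : ℕ) :
      ∑ k ∈ Finset.range (N + 1), a (k + 1) * (p * b (N - k + 1)) = b (N + 2) - a (N + 2) := by
    rw [hrenewal (N + 1), add_sub_cancel_left]
    refine Finset.sum_congr rfl fun k hk => ?_
    rw [Nat.sub_add_comm (Nat.lt_succ_iff.1 (Finset.mem_range.1 hk))]
  rw [← hb.of_norm.tsum_mul_left, tsum_mul_tsum_eq_tsum_sum_range_of_summable_norm ha hpb,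
    tsum_congr hconv, hb.of_norm.tsum_eq_zero_add, ha.of_norm.tsum_eq_zero_add,
    ((summable_nat_add_iff 1).2 hb.of_norm).tsum_sub ((summable_nat_add_iff 1).2 ha.of_norm),
    hrenewal 0]
  simp only [Finset.range_zero, Finset.sum_empty, add_zero]
  abel

theorem integral_pi_fin_succ_eq_integral_integral_snoc {α F : Type*} [MeasurableSpace α]
    [NormedAddCommGroup F] [NormedSpace ℝ F] {μ : Measure α} [SigmaFinite μ] {m : ℕ}
    {φ : (Fin (m + 1) → α) → F} (hφ : Integrable φ (Measure.pi fun _ => μ)) :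
    ∫ u, φ u ∂(Measure.pi fun _ => μ)
      = ∫ v, ∫ s, φ (Fin.snoc v s) ∂μ ∂(Measure.pi fun _ => μ) := by
  let e := (MeasurableEquiv.piFinSuccAbove (fun _ : Fin (m + 1) => α) (Fin.last m)).symm
  have he : MeasurePreserving e (μ.prod (Measure.pi fun _ => μ)) (Measure.pi fun _ => μ) :=
    (measurePreserving_piFinSuccAbove (fun _ => μ) (Fin.last m)).symm
  have he_apply (p : α × (Fin m → α)) : e p = Fin.snoc p.2 p.1 := by
    simp [e, MeasurableEquiv.piFinSuccAbove_symm_apply, Fin.insertNthEquiv, Fin.insertNth_last']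
  have hφe : Integrable (fun p : α × (Fin m → α) => φ (Fin.snoc p.2 p.1))
      (μ.prod (Measure.pi fun _ => μ)) := by
    simpa only [Function.comp_def, he_apply] using
      (he.integrable_comp_emb e.measurableEmbedding).mpr hφ
  rw [← he.integral_comp e.measurableEmbedding]
  simp only [he_apply]
  rw [integral_prod _ hφe, integral_integral_swap hφe]

theorem integral_sub_pow_div_factorial (t₀ r : ℝ) (n : ℕ) :
    ∫ s in t₀..r, (s - t₀) ^ n / n.factorial = (r - t₀) ^ (n + 1) / (n + 1).factorial := by
  rw [intervalIntegral.integral_div, intervalIntegral.integral_comp_sub_right (· ^ n),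
    integral_pow, Nat.factorial_succ]
  push_cast
  field_simp
  ring

section Volterra

variable {A : Type*} [NormedRing A] [NormedAlgebra ℝ A] (H : ℝ → A) (t₀ : ℝ)

noncomputable def volterra (g : ℝ → A) (r : ℝ) : A :=
  ∫ s in t₀..r, H s * g s

variable {H}

theorem continuous_volterra (hH : Continuous H) {g : ℝ → A} (hg : Continuous g) :
    Continuous (volterra H t₀ g) :=
  intervalIntegral.continuous_primitive (fun _ _ => (hH.mul hg).intervalIntegrable _ _) t₀

theorem continuous_volterra_iterate (hH : Continuous H) {g : ℝ → A} (hg : Continuous g)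
    (n : ℕ) : Continuous ((volterra H t₀)^[n] g) := by
  induction n with
  | zero => exact hg
  | succ n ih => simpa only [Function.iterate_succ_apply'] using continuous_volterra t₀ hH ih

theorem norm_volterra_iterate_le {t : ℝ} {g : ℝ → A} {M C : ℝ} (hM : 0 ≤ M)
    (hHM : ∀ s ∈ Icc t₀ t, ‖H s‖ ≤ M) (hgC : ∀ s ∈ Icc t₀ t, ‖g s‖ ≤ C)
    (n : ℕ) {r : ℝ} (hr : r ∈ Icc t₀ t) :
    ‖(volterra H t₀)^[n] g r‖ ≤ C * (M * (r - t₀)) ^ n / n.factorial := by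
  induction n generalizing r with
  | zero => simpa using hgC r hr
  | succ n ih =>
    rw [Function.iterate_succ_apply', volterra]
    calc ‖∫ s in t₀..r, H s * (volterra H t₀)^[n] g s‖
        ≤ ∫ s in t₀..r, M * (C * (M * (s - t₀)) ^ n / n.factorial) := by
          refine intervalIntegral.norm_integral_le_of_norm_le hr.1
            (Filter.Eventually.of_forall fun s hs => ?_)
            (Continuous.intervalIntegrable (by fun_prop) _ _)
          have hs' : s ∈ Icc t₀ t := ⟨hs.1.le, hs.2.trans hr.2⟩
          exact (norm_mul_le _ _).trans (mul_le_mul (hHM s hs') (ih hs') (norm_nonneg _) hM)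
      _ = C * M ^ (n + 1) * ∫ s in t₀..r, (s - t₀) ^ n / n.factorial := by
          rw [← intervalIntegral.integral_const_mul]
          congr 1
          ext s
          rw [mul_pow]
          ring
      _ = C * (M * (r - t₀)) ^ (n + 1) / (n + 1).factorial := by
          rw [integral_sub_pow_div_factorial, mul_pow]
          ring

theorem nested_mul_prod_eq_mul_volterra_iterate [CompleteSpace A] (hH : Continuous H) (n : ℕ)
    (a : A) (r : ℝ) :
    nested n (fun u => a * (List.ofFn fun i => H (u i)).prod) t₀ r
      = a * (volterra H t₀)^[n] 1 r := by
  induction n generalizing a r with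
  | zero => simp [nested]
  | succ n ih =>
    have hcons (s : ℝ) :
        (fun u : Fin n → ℝ => a * (List.ofFn fun i => H ((Fin.cons s u : Fin (n + 1) → ℝ) i)).prod)
          = fun u => a * H s * (List.ofFn fun i => H (u i)).prod := by
      funext u
      simp [List.ofFn_succ, mul_assoc]
    simp only [nested, hcons, ih]
    simp only [Function.iterate_succ_apply', volterra, mul_assoc]
    exact (ContinuousLinearMap.mul ℝ A a).intervalIntegral_comp_comm
      ((hH.mul (continuous_volterra_iterate t₀ hH continuous_const n)).intervalIntegrable t₀ r)

end Volterra

noncomputable def cubeMeasure (t₀ t : ℝ) (m : ℕ) : Measure (Fin m → ℝ) :=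
  Measure.pi fun _ => volume.restrict (Icc t₀ t)

section Cube

variable (t₀ t : ℝ) (m : ℕ)

instance : IsFiniteMeasure (cubeMeasure t₀ t m) := by
  unfold cubeMeasure
  infer_instance

theorem volume_restrict_Icc_eq_cubeMeasure :
    (volume : Measure (Fin m → ℝ)).restrict (Icc (fun _ => t₀) (fun _ => t))
      = cubeMeasure t₀ t m := by
  rw [← pi_univ_Icc, volume_pi, Measure.restrict_pi_pi, cubeMeasure]

theorem ae_cubeMeasure_mem : ∀ᵐ u ∂cubeMeasure t₀ t m, ∀ i, u i ∈ Icc t₀ t := by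
  rw [← volume_restrict_Icc_eq_cubeMeasure]
  filter_upwards [ae_restrict_mem measurableSet_Icc] with u hu i
  exact ⟨hu.1 i, hu.2 i⟩

end Cube

section ThetaChain

variable {F : Type*} [NormedAddCommGroup F] [NormedSpace ℂ F] (H : ℝ → F →L[ℂ] F)
  (P : F →L[ℂ] F)

theorem thetaP_eq_ite_sub (s : ℝ) : thetaP P s = (if 0 < s then 1 else 0) - P := by
  unfold thetaP
  split_ifs <;> simp

theorem norm_thetaP_le (s : ℝ) : ‖thetaP P s‖ ≤ max ‖1 - P‖ ‖P‖ := by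
  unfold thetaP
  split_ifs
  · exact le_max_left _ _
  · exact norm_neg P ▸ le_max_right _ _

theorem stronglyMeasurable_thetaP : StronglyMeasurable (thetaP P) :=
  StronglyMeasurable.ite measurableSet_Ioi stronglyMeasurable_const stronglyMeasurable_const

theorem setIntegral_thetaP_mul {f : ℝ → F →L[ℂ] F} {t₀ t r : ℝ}
    (hf : IntegrableOn f (Icc t₀ t)) (hr : r ∈ Icc t₀ t) :
    ∫ s in Icc t₀ t, thetaP P (r - s) * f s = (∫ s in t₀..r, f s) - P * ∫ s in t₀..t, f s := by
  have hθ (s : ℝ) : thetaP P (r - s) * f s = (Iio r).indicator f s - P * f s := by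
    by_cases hs : s < r <;> simp [thetaP_eq_ite_sub, sub_mul, hs]
  have hIco : Iio r ∩ Icc t₀ t = Ico t₀ r := by
    ext s
    simp only [mem_inter_iff, mem_Iio, mem_Icc, mem_Ico]
    exact ⟨fun h => ⟨h.2.1, h.1⟩, fun h => ⟨h.2, h.1, h.2.le.trans hr.2⟩⟩
  simp_rw [hθ]
  rw [integral_sub (hf.integrable.indicator measurableSet_Iio) (hf.integrable.const_mul P),
    integral_indicator measurableSet_Iio, Measure.restrict_restrict measurableSet_Iio, hIco,
    integral_const_mul_of_integrable hf, intervalIntegral.integral_of_le hr.1,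
    intervalIntegral.integral_of_le (hr.1.trans hr.2), integral_Icc_eq_integral_Ioc,
    integral_Ico_eq_integral_Ioo, integral_Ioc_eq_integral_Ioo, integral_Ioc_eq_integral_Ioo]

noncomputable def thetaChain : (n : ℕ) → (Fin (n + 1) → ℝ) → F →L[ℂ] F
  | 0, u => H (u 0)
  | n + 1, u => H (u 0) * thetaP P (u 0 - u 1) * thetaChain n (Fin.tail u)

theorem ofFn_prod_eq_thetaChain (n : ℕ) (u : Fin (n + 1) → ℝ) :
    (List.ofFn fun i : Fin (n + 1) =>
        H (u i) * if h : (i : ℕ) + 1 < n + 1 then thetaP P (u i - u ⟨i + 1, h⟩) else 1).prod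
      = thetaChain H P n u := by
  induction n with
  | zero => simp [thetaChain]
  | succ n ih =>
    rw [List.ofFn_succ, List.prod_cons, dif_pos (by simp), thetaChain, mul_assoc,
      ← ih (Fin.tail u)]
    simp only [Fin.val_succ, Fin.tail, Nat.add_lt_add_iff_right]
    rfl

theorem thetaChain_snoc (n : ℕ) (v : Fin (n + 1) → ℝ) (s : ℝ) :
    thetaChain H P (n + 1) (Fin.snoc v s)
      = thetaChain H P n v * thetaP P (v (Fin.last n) - s) * H s := by
  induction n with
  | zero => rfl
  | succ n ih =>
    induction v using Fin.consCases with
    | cons a w =>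
      rw [← Fin.cons_snoc_eq_snoc_cons, thetaChain, Fin.tail_cons, ih, thetaChain, Fin.tail_cons]
      simp [mul_assoc]

variable {H}

theorem stronglyMeasurable_thetaChain (hH : Continuous H) (n : ℕ) :
    StronglyMeasurable (thetaChain H P n) := by
  induction n with
  | zero => exact (hH.comp (continuous_apply 0)).stronglyMeasurable
  | succ n ih =>
    exact ((hH.comp (continuous_apply 0)).stronglyMeasurable.mul
      ((stronglyMeasurable_thetaP P).comp_measurable (by fun_prop))).mul
      (ih.comp_measurable (measurable_pi_lambda _ fun i => measurable_pi_apply i.succ))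

theorem norm_thetaChain_le {S : Set ℝ} {M : ℝ} (hM : 0 ≤ M) (hHM : ∀ s ∈ S, ‖H s‖ ≤ M) (n : ℕ)
    {u : Fin (n + 1) → ℝ} (hu : ∀ i, u i ∈ S) :
    ‖thetaChain H P n u‖ ≤ M * (max ‖1 - P‖ ‖P‖ * M) ^ n := by
  induction n with
  | zero => simpa [thetaChain] using hHM _ (hu 0)
  | succ n ih =>
    calc ‖thetaChain H P (n + 1) u‖
        ≤ ‖H (u 0)‖ * ‖thetaP P (u 0 - u 1)‖ * ‖thetaChain H P n (Fin.tail u)‖ :=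
          (norm_mul_le _ _).trans (mul_le_mul_of_nonneg_right (norm_mul_le _ _) (norm_nonneg _))
      _ ≤ M * max ‖1 - P‖ ‖P‖ * (M * (max ‖1 - P‖ ‖P‖ * M) ^ n) := by
          gcongr
          exacts [hHM _ (hu 0), norm_thetaP_le P _, ih fun i => hu _]
      _ = M * (max ‖1 - P‖ ‖P‖ * M) ^ (n + 1) := by ring

end ThetaChain

section ChainIntegral

variable {F : Type*} [NormedAddCommGroup F] [NormedSpace ℂ F] {H : ℝ → F →L[ℂ] F}
  {P : F →L[ℂ] F} (t₀ t : ℝ)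

variable (H P) in
noncomputable def chainIntegral (n : ℕ) (g : ℝ → F →L[ℂ] F) : F →L[ℂ] F :=
  ∫ u, thetaChain H P n u * g (u (Fin.last n)) ∂cubeMeasure t₀ t (n + 1)

theorem integrable_thetaChain_mul (hH : Continuous H) {g : ℝ → F →L[ℂ] F} (hg : Continuous g)
    (n : ℕ) :
    Integrable (fun u => thetaChain H P n u * g (u (Fin.last n))) (cubeMeasure t₀ t (n + 1)) := by
  obtain ⟨M, hM⟩ := (isCompact_Icc (a := t₀) (b := t)).exists_bound_of_continuousOn hH.continuousOn
  obtain ⟨C, hC⟩ := (isCompact_Icc (a := t₀) (b := t)).exists_bound_of_continuousOn hg.continuousOn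
  refine Integrable.of_bound (((stronglyMeasurable_thetaChain P hH n).mul
    (hg.comp (continuous_apply _)).stronglyMeasurable).aestronglyMeasurable)
    (max M 0 * (max ‖1 - P‖ ‖P‖ * max M 0) ^ n * C) ?_
  filter_upwards [ae_cubeMeasure_mem t₀ t (n + 1)] with u hu
  refine (norm_mul_le _ _).trans (mul_le_mul ?_ (hC _ (hu _)) (norm_nonneg _) (by positivity))
  exact norm_thetaChain_le P (le_max_right M 0) (fun s hs => (hM s hs).trans (le_max_left M 0)) n hu

theorem chainIntegral_zero (hle : t₀ ≤ t) (g : ℝ → F →L[ℂ] F) :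
    chainIntegral H P t₀ t 0 g = volterra H t₀ g t := by
  have e := measurePreserving_piUnique fun _ : Fin 1 => volume.restrict (Icc t₀ t)
  refine (e.integral_comp (MeasurableEquiv.piUnique _).measurableEmbedding
    fun s => H s * g s).trans ?_
  rw [volterra, intervalIntegral.integral_of_le hle, integral_Icc_eq_integral_Ioc]

theorem chainIntegral_succ [CompleteSpace F] (hH : Continuous H) {g : ℝ → F →L[ℂ] F}
    (hg : Continuous g) (n : ℕ) :
    chainIntegral H P t₀ t (n + 1) g
      = chainIntegral H P t₀ t n (volterra H t₀ g)
        - chainIntegral H P t₀ t n 1 * (P * volterra H t₀ g t) := by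
  have hHg : Continuous fun s => H s * g s := hH.mul hg
  have hlast (v : Fin (n + 1) → ℝ) (hv : v (Fin.last n) ∈ Icc t₀ t) :
      ∫ s in Icc t₀ t, thetaChain H P (n + 1) (Fin.snoc v s)
          * g ((Fin.snoc v s : Fin (n + 2) → ℝ) (Fin.last (n + 1)))
        = thetaChain H P n v * volterra H t₀ g (v (Fin.last n))
          - thetaChain H P n v * (P * volterra H t₀ g t) := by
    simp only [thetaChain_snoc, Fin.snoc_last, mul_assoc]
    rw [integral_const_mul_of_integrable, setIntegral_thetaP_mul P hHg.integrableOn_Icc hv]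
    · simp [volterra, mul_sub]
    · exact hHg.integrableOn_Icc.bdd_mul
        ((stronglyMeasurable_thetaP P).comp_measurable (by fun_prop)).aestronglyMeasurable
        (Filter.Eventually.of_forall fun s => norm_thetaP_le P _)
  have hint : Integrable (thetaChain H P n) (cubeMeasure t₀ t (n + 1)) := by
    simpa using integrable_thetaChain_mul t₀ t (P := P) hH (g := 1) continuous_const n
  calc chainIntegral H P t₀ t (n + 1) g
      = ∫ v, (∫ s in Icc t₀ t, thetaChain H P (n + 1) (Fin.snoc v s)
          * g ((Fin.snoc v s : Fin (n + 2) → ℝ) (Fin.last (n + 1)))) ∂cubeMeasure t₀ t (n + 1) :=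
        integral_pi_fin_succ_eq_integral_integral_snoc
          (integrable_thetaChain_mul t₀ t hH hg (n + 1))
    _ = ∫ v, thetaChain H P n v * volterra H t₀ g (v (Fin.last n))
          - thetaChain H P n v * (P * volterra H t₀ g t) ∂cubeMeasure t₀ t (n + 1) :=
        integral_congr_ae ((ae_cubeMeasure_mem t₀ t (n + 1)).mono fun v hv => hlast v (hv _))
    _ = _ := by
        rw [integral_sub (integrable_thetaChain_mul t₀ t hH (continuous_volterra t₀ hH hg) n)
          (hint.mul_const _), integral_mul_const_of_integrable hint]
        simp [chainIntegral]

theorem chainIntegral_add_sum_eq_volterra_iterate [CompleteSpace F] (hH : Continuous H)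
    (hle : t₀ ≤ t) (n : ℕ) {g : ℝ → F →L[ℂ] F} (hg : Continuous g) :
    chainIntegral H P t₀ t n g
        + ∑ j ∈ Finset.range n, chainIntegral H P t₀ t j 1 * (P * (volterra H t₀)^[n - j] g t)
      = (volterra H t₀)^[n + 1] g t := by
  induction n generalizing g with
  | zero => simp [chainIntegral_zero t₀ t hle]
  | succ n ih =>
    have hshift : ∀ j ∈ Finset.range n,
        (volterra H t₀)^[n + 1 - j] g = (volterra H t₀)^[n - j] (volterra H t₀ g) := by
      intro j hj
      rw [Nat.sub_add_comm (Finset.mem_range.1 hj).le, Function.iterate_succ_apply]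
    rw [chainIntegral_succ t₀ t hH hg, Finset.sum_range_succ,
      Finset.sum_congr rfl fun j hj => by rw [hshift j hj], Function.iterate_succ_apply,
      ← ih (continuous_volterra t₀ hH hg), Nat.add_sub_cancel_left, Function.iterate_one]
    abel

end ChainIntegral

section DysonSeries

variable {F : Type*} [NormedAddCommGroup F] [NormedSpace ℂ F] {H : ℝ → F →L[ℂ] F}
  (P : F →L[ℂ] F) {t₀ t : ℝ}

theorem Uterm_eq_smul_volterra_iterate [CompleteSpace F] (hH : Continuous H) (n : ℕ) :
    Uterm H t₀ t n = (-Complex.I) ^ n • (volterra H t₀)^[n] 1 t := by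
  rw [Uterm]
  congr 1
  simpa only [one_mul] using nested_mul_prod_eq_mul_volterra_iterate t₀ hH n 1 t

theorem Cterm_succ_eq_smul_chainIntegral (n : ℕ) :
    Cterm H P t₀ t (n + 1) = (-Complex.I) ^ (n + 1) • chainIntegral H P t₀ t n 1 := by
  rw [Cterm, volume_restrict_Icc_eq_cubeMeasure, chainIntegral]
  simp only [ofFn_prod_eq_thetaChain, Pi.one_apply, mul_one]

theorem summable_norm_Uterm [CompleteSpace F] (hH : Continuous H) (hle : t₀ ≤ t) :
    Summable fun n => ‖Uterm H t₀ t n‖ := by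
  obtain ⟨M, hM⟩ := (isCompact_Icc (a := t₀) (b := t)).exists_bound_of_continuousOn hH.continuousOn
  have hM₀ : 0 ≤ M := (norm_nonneg _).trans (hM t₀ ⟨le_rfl, hle⟩)
  refine ((Real.summable_pow_div_factorial (M * (t - t₀))).mul_left
    ‖(1 : F →L[ℂ] F)‖).of_nonneg_of_le (fun _ => norm_nonneg _) fun n => ?_
  rw [Uterm_eq_smul_volterra_iterate hH, norm_smul, norm_pow, norm_neg, Complex.norm_I, one_pow,
    one_mul, ← mul_div_assoc]
  exact norm_volterra_iterate_le t₀ hM₀ hM (fun _ _ => le_rfl) n ⟨hle, le_rfl⟩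

theorem Uterm_succ_eq_Cterm_add_sum [CompleteSpace F] (hH : Continuous H) (hle : t₀ ≤ t)
    (n : ℕ) :
    Uterm H t₀ t (n + 1) = Cterm H P t₀ t (n + 1)
      + ∑ j ∈ Finset.range n, Cterm H P t₀ t (j + 1) * (P * Uterm H t₀ t (n - j)) := by
  rw [Uterm_eq_smul_volterra_iterate hH,
    ← chainIntegral_add_sum_eq_volterra_iterate t₀ t hH hle n (g := 1) continuous_const,
    smul_add, Finset.smul_sum, Cterm_succ_eq_smul_chainIntegral]
  congr 1
  refine Finset.sum_congr rfl fun j hj => ?_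
  rw [Cterm_succ_eq_smul_chainIntegral, Uterm_eq_smul_volterra_iterate hH, mul_smul_comm,
    mul_smul_comm, smul_mul_assoc, smul_smul, ← pow_add, ← add_assoc,
    Nat.sub_add_cancel (Finset.mem_range.1 hj).le]

end DysonSeries

/-- With `U(t,t₀) = 1 + Σ_{n≥1} Uₙ(t,t₀)` and `K(t,t₀) = Σ_{n≥1} Cₙ(t,t₀)`
(assuming `Σ_{n≥1} ‖Cₙ(t,t₀)‖ < ∞`), one has
`U(t,t₀) P = (P + Q K(t,t₀) P) · (P U(t,t₀) P)` where `Q = 1 − P`. -/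
theorem UP_eq (H : ℝ → E →L[ℂ] E) (hH : Continuous H)
    (P : E →L[ℂ] E) (hP : P * P = P) (t₀ t : ℝ) (hle : t₀ ≤ t)
    (hC : Summable fun n : ℕ => ‖Cterm H P t₀ t (n + 1)‖) :
    (1 + ∑' n : ℕ, Uterm H t₀ t (n + 1)) * P =
      (P + (1 - P) * (∑' n : ℕ, Cterm H P t₀ t (n + 1)) * P) *
        (P * (1 + ∑' n : ℕ, Uterm H t₀ t (n + 1)) * P) :=
  IsIdempotentElem.one_add_mul_eq_of_mul_mul_eq_sub hP <|
    tsum_mul_tsum_eq_of_renewal P hC ((summable_nat_add_iff 1).2 (summable_norm_Uterm hH hle))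
      (Uterm_succ_eq_Cterm_add_sum P hH hle)
end

section
/- Let E be a complex Banach space, H : ℝ → B(E) continuous in operator norm, P ∈ B(E) an idempotent, Q := 1 − P, and t₀ ≤ t. With Uₙ(t,t₀) := (−i)ⁿ ∫_{t₀}^{t} dt₁ ∫_{t₀}^{t₁} dt₂ ⋯ ∫_{t₀}^{t_{n−1}} dtₙ H(t₁)⋯H(tₙ), θ_P(s) := Q for s > 0 and −P for s ≤ 0, and Cₙ(t,t₀) := (−i)ⁿ ∫_{[t₀,t]ⁿ} H(t₁) θ_P(t₁−t₂) H(t₂) ⋯ θ_P(t_{n−1}−tₙ) H(tₙ) dt₁⋯dtₙ, one has for every n ≥ 1: Uₙ(t,t₀) = Cₙ(t,t₀) + Σ_{i=1}^{n−1} Cᵢ(t,t₀) P U_{n−i}(t,t₀). -/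
/-!
Write `χ` for the Heaviside step, so that `θ_P(s) = χ(s) - P`. Both sides are built from integrals
over the cube `[t₀, t]ⁿ` of chain products `H(t₁) g(t₁ - t₂) H(t₂) ⋯ g(t_{n-1} - tₙ) H(tₙ)`. With
every gap `g = χ` the integrand vanishes off the simplex `t₁ > ⋯ > tₙ`, and the cube integral is the
nested integral defining `(-i)⁻ⁿ Uₙ`; with every gap `g = θ_P` it is `(-i)⁻ⁿ Cₙ`.

Turn the gaps from `χ` into `θ_P` one at a time, from the left. Turning the `i`-th gap adds
`-(H θ_P ⋯ θ_P H)(t₁, …, tᵢ) · P · (H χ ⋯ χ H)(tᵢ₊₁, …, tₙ)` to the integrand, a product of a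
function of the first `i` and a function of the last `n - i` variables. By Fubini the integral
changes by `-(-i)⁻ⁿ Cᵢ P U_{n-i}`, and summing over `i = 1, …, n - 1` gives the identity.
-/

open MeasureTheory

variable {E : Type*} [NormedAddCommGroup E] [NormedSpace ℂ E] [CompleteSpace E]

namespace Dyson

section Cube

variable {G : Type*} [NormedAddCommGroup G] {t₀ t : ℝ} {n : ℕ}

def cube (t₀ t : ℝ) (n : ℕ) : Set (Fin n → ℝ) := Set.Icc (fun _ => t₀) (fun _ => t)

theorem mem_cube {u : Fin n → ℝ} : u ∈ cube t₀ t n ↔ ∀ i, u i ∈ Set.Icc t₀ t := by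
  simp only [cube, Set.mem_Icc, Pi.le_def, forall_and]

theorem cons_mem_cube {x : ℝ} {v : Fin n → ℝ} :
    Fin.cons x v ∈ cube t₀ t (n + 1) ↔ x ∈ Set.Icc t₀ t ∧ v ∈ cube t₀ t n := by
  simp only [mem_cube, Fin.forall_fin_succ, Fin.cons_zero, Fin.cons_succ]

theorem measurableSet_cube : MeasurableSet (cube t₀ t n) := measurableSet_Icc

theorem volume_cube_lt_top : volume (cube t₀ t n) < ⊤ := isCompact_Icc.measure_lt_top

theorem setIntegral_cube_zero [NormedSpace ℝ G] [CompleteSpace G] (c : G) :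
    ∫ _ in cube t₀ t 0, c = c := by
  have : cube t₀ t 0 = Set.univ := Set.eq_univ_of_forall fun u => mem_cube.2 (·.elim0)
  rw [this, setIntegral_univ, integral_const, measureReal_def, volume_pi, Measure.pi_empty_univ]
  simp

theorem integrableOn_cube_of_norm_le {f : (Fin n → ℝ) → G} (hf : StronglyMeasurable f) {C : ℝ}
    (hC : ∀ u ∈ cube t₀ t n, ‖f u‖ ≤ C) : IntegrableOn f (cube t₀ t n) :=
  Measure.integrableOn_of_bounded volume_cube_lt_top.ne hf.aestronglyMeasurable
    ((ae_restrict_mem measurableSet_cube).mono hC)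

theorem setIntegral_cube_succ [NormedSpace ℝ G] {F : (Fin (n + 1) → ℝ) → G}
    (hF : IntegrableOn F (cube t₀ t (n + 1))) :
    ∫ u in cube t₀ t (n + 1), F u =
      ∫ x in Set.Icc t₀ t, ∫ v in cube t₀ t n, F (Fin.cons x v) := by
  have he := (volume_preserving_piFinSuccAbove (fun _ : Fin (n + 1) => ℝ) 0).symm
  have hcons : ∀ p : ℝ × (Fin n → ℝ),
      (MeasurableEquiv.piFinSuccAbove (fun _ => ℝ) 0).symm p = Fin.cons p.1 p.2 := fun p => by
    simp [MeasurableEquiv.piFinSuccAbove_symm_apply, Fin.insertNthEquiv]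
  have hpre : (MeasurableEquiv.piFinSuccAbove (fun _ => ℝ) 0).symm ⁻¹' cube t₀ t (n + 1) =
      Set.Icc t₀ t ×ˢ cube t₀ t n := by
    ext p
    simp only [Set.mem_preimage, hcons, Set.mem_prod, cons_mem_cube]
  rw [← he.integrableOn_comp_preimage (MeasurableEquiv.measurableEmbedding _), hpre] at hF
  rw [← he.setIntegral_preimage_emb (MeasurableEquiv.measurableEmbedding _), hpre]
  simp only [Function.comp_def, hcons] at hF ⊢
  exact setIntegral_prod _ hF

theorem setIntegral_cube_add_mul {A : Type*} [NormedRing A] [NormedAlgebra ℝ A]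
    [CompleteSpace A] {m k : ℕ} {f : (Fin m → ℝ) → A} {g : (Fin k → ℝ) → A}
    (hf : IntegrableOn f (cube t₀ t m)) (hg : IntegrableOn g (cube t₀ t k)) :
    ∫ u in cube t₀ t (m + k),
        f (fun i => u (Fin.castAdd k i)) * g (fun i => u (Fin.natAdd m i)) =
      (∫ x in cube t₀ t m, f x) * ∫ y in cube t₀ t k, g y := by
  let e := (MeasurableEquiv.sumPiEquivProdPi fun _ : Fin m ⊕ Fin k => ℝ).symm.trans
    (MeasurableEquiv.piCongrLeft (fun _ => ℝ) finSumFinEquiv)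
  have he : MeasurePreserving e volume volume :=
    (volume_measurePreserving_piCongrLeft (fun _ => ℝ) finSumFinEquiv).comp
      (volume_measurePreserving_sumPiEquivProdPi_symm _)
  have he_left (x : Fin m → ℝ) (y : Fin k → ℝ) (i : Fin m) : e (x, y) (Fin.castAdd k i) = x i := by
    simpa [e, MeasurableEquiv.coe_piCongrLeft, MeasurableEquiv.coe_sumPiEquivProdPi_symm] using
      Equiv.piCongrLeft_sumInl (fun _ => ℝ) finSumFinEquiv x y i
  have he_right (x : Fin m → ℝ) (y : Fin k → ℝ) (j : Fin k) : e (x, y) (Fin.natAdd m j) = y j := by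
    simpa [e, MeasurableEquiv.coe_piCongrLeft, MeasurableEquiv.coe_sumPiEquivProdPi_symm] using
      Equiv.piCongrLeft_sumInr (fun _ => ℝ) finSumFinEquiv x y j
  have hpre : e ⁻¹' cube t₀ t (m + k) = cube t₀ t m ×ˢ cube t₀ t k := by
    ext ⟨x, y⟩
    simp only [Set.mem_preimage, Set.mem_prod, mem_cube, Fin.forall_fin_add, he_left, he_right]
  rw [← he.setIntegral_preimage_emb e.measurableEmbedding, hpre]
  simp only [he_left, he_right]
  rw [Measure.volume_eq_prod, ← Measure.prod_restrict]
  exact integral_prod_bilin (ContinuousLinearMap.mul ℝ A) hf hg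

end Cube

section Chain

variable {A : Type*} [Monoid A] (H : ℝ → A)

def gapProd : (ℕ → ℝ → A) → ℕ → (ℕ → ℝ) → A
  | _, 0, _ => 1
  | g, n + 1, u => g 0 (u 0 - u 1) * H (u 1) * gapProd (fun j => g (j + 1)) n (fun i => u (i + 1))

def chainProd (g : ℕ → ℝ → A) : ℕ → (ℕ → ℝ) → A
  | 0, _ => 1
  | n + 1, u => H (u 0) * gapProd H g n u

variable {H}

theorem gapProd_congr {n : ℕ} {g g' : ℕ → ℝ → A} {u v : ℕ → ℝ}
    (hg : ∀ j < n, g j = g' j) (hu : ∀ i ≤ n, u i = v i) : gapProd H g n u = gapProd H g' n v := by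
  induction n generalizing g g' u v with
  | zero => rfl
  | succ n ih =>
    simp only [gapProd]
    rw [hg 0 n.succ_pos, hu 0 (Nat.zero_le _), hu 1 (by omega),
      ih (fun j hj => hg (j + 1) (by omega)) (fun i hi => hu (i + 1) (by omega))]

theorem chainProd_congr {n : ℕ} {g g' : ℕ → ℝ → A} {u v : ℕ → ℝ}
    (hg : ∀ j, j + 1 < n → g j = g' j) (hu : ∀ i < n, u i = v i) :
    chainProd H g n u = chainProd H g' n v := by
  cases n with
  | zero => rfl
  | succ n =>
    simp only [chainProd]
    rw [hu 0 n.succ_pos, gapProd_congr (fun j hj => hg j (by omega)) (fun i hi => hu i (by omega))]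

theorem gapProd_add (g : ℕ → ℝ → A) (a : ℕ) {k : ℕ} (hk : 0 < k) (u : ℕ → ℝ) :
    gapProd H g (a + k) u = gapProd H g a u * g a (u a - u (a + 1)) *
      chainProd H (fun j => g (j + (a + 1))) k (fun i => u (i + (a + 1))) := by
  induction a generalizing g u with
  | zero =>
    obtain ⟨k, rfl⟩ := Nat.exists_eq_add_one_of_ne_zero hk.ne'
    rw [Nat.zero_add]
    simp only [gapProd, chainProd, one_mul, mul_assoc]
  | succ a ih =>
    rw [Nat.add_right_comm]
    simp only [gapProd]
    rw [ih]
    simp only [mul_assoc]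
    rfl

theorem chainProd_add (g : ℕ → ℝ → A) (a : ℕ) {k : ℕ} (hk : 0 < k) (u : ℕ → ℝ) :
    chainProd H g (a + 1 + k) u = chainProd H g (a + 1) u * g a (u a - u (a + 1)) *
      chainProd H (fun j => g (j + (a + 1))) k (fun i => u (i + (a + 1))) := by
  rw [Nat.add_right_comm]
  simp only [chainProd, gapProd_add g a hk, mul_assoc]

theorem chainProd_succ_succ (g : ℕ → ℝ → A) (n : ℕ) (u : ℕ → ℝ) :
    chainProd H g (n + 2) u = H (u 0) * g 0 (u 0 - u 1) *
      chainProd H (fun j => g (j + 1)) (n + 1) (fun i => u (i + 1)) := by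
  simp only [chainProd, gapProd, mul_assoc]

end Chain

/-- Chain products live on sequences `ℕ → ℝ`, where they can be cut at any index; a point of the
cube is padded by zeros, which are never read. -/
def zeroExtend : (n : ℕ) → (Fin n → ℝ) → ℕ → ℝ
  | 0, _, _ => 0
  | _ + 1, u, 0 => u 0
  | n + 1, u, i + 1 => zeroExtend n (Fin.tail u) i

theorem zeroExtend_of_lt {n i : ℕ} (u : Fin n → ℝ) (h : i < n) :
    zeroExtend n u i = u ⟨i, h⟩ := by
  induction n generalizing i with
  | zero => exact absurd h (Nat.not_lt_zero i)
  | succ n ih =>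
    cases i with
    | zero => rfl
    | succ i => exact ih (Fin.tail u) (by omega)

theorem zeroExtend_mem_Icc {t₀ t : ℝ} {n i : ℕ} {u : Fin n → ℝ} (hu : u ∈ cube t₀ t n)
    (h : i < n) : zeroExtend n u i ∈ Set.Icc t₀ t :=
  zeroExtend_of_lt u h ▸ mem_cube.1 hu _

theorem measurable_zeroExtend (n : ℕ) : Measurable (zeroExtend n) := by
  refine measurable_pi_lambda _ fun i => ?_
  induction n generalizing i with
  | zero => exact measurable_const
  | succ n ih =>
    cases i with
    | zero => exact measurable_pi_apply 0
    | succ i => exact (ih i).comp (measurable_pi_lambda _ fun j => measurable_pi_apply j.succ)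

theorem measurable_zeroExtend_cons {n : ℕ} (s : ℝ) :
    Measurable fun v : Fin n → ℝ => zeroExtend (n + 1) (Fin.cons s v) := by
  refine measurable_pi_lambda _ fun i => ?_
  cases i with
  | zero => exact measurable_const
  | succ i => exact (measurable_pi_apply i).comp (measurable_zeroExtend n)

theorem list_prod_ofFn_eq_chainProd {M : Type*} [Monoid M] (H : ℝ → M) (γ : ℝ → M) (n : ℕ)
    (u : Fin n → ℝ) :
    (List.ofFn fun i : Fin n =>
      H (u i) * if h : (i : ℕ) + 1 < n then γ (u i - u ⟨(i : ℕ) + 1, h⟩) else 1).prod =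
      chainProd H (fun _ => γ) n (zeroExtend n u) := by
  induction n with
  | zero => rfl
  | succ n ih =>
    cases n with
    | zero => simp [chainProd, gapProd, zeroExtend]
    | succ n =>
      have hshift : (fun i => zeroExtend (n + 2) u (i + 1)) = zeroExtend (n + 1) (Fin.tail u) :=
        rfl
      rw [chainProd_succ_succ, hshift, ← ih, List.ofFn_succ, List.prod_cons,
        dif_pos (by simp only [Fin.val_zero]; omega)]
      simp only [Fin.val_succ, Nat.add_lt_add_iff_right, mul_assoc]
      rfl

section Integrability

variable {A : Type*} [NormedRing A] {H : ℝ → A} {g : ℕ → ℝ → A}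

theorem stronglyMeasurable_gapProd (hH : StronglyMeasurable H)
    (hg : ∀ j, StronglyMeasurable (g j)) (n : ℕ) : StronglyMeasurable (gapProd H g n) := by
  induction n generalizing g with
  | zero => exact stronglyMeasurable_const
  | succ n ih =>
    exact (((hg 0).comp_measurable ((measurable_pi_apply 0).sub (measurable_pi_apply 1))).mul
      (hH.comp_measurable (measurable_pi_apply 1))).mul
      ((ih fun j => hg (j + 1)).comp_measurable
        (measurable_pi_lambda _ fun i => measurable_pi_apply (i + 1)))

theorem norm_gapProd_le {S : Set ℝ} {MH Mg : ℝ} (hH : ∀ x ∈ S, ‖H x‖ ≤ MH)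
    (hg : ∀ j s, ‖g j s‖ ≤ Mg) {n : ℕ} {u : ℕ → ℝ} (hu : ∀ i ≤ n, u i ∈ S) :
    ‖gapProd H g n u‖ ≤ ‖(1 : A)‖ * (Mg * MH) ^ n := by
  induction n generalizing g u with
  | zero => simp [gapProd]
  | succ n ih =>
    have hu1 := hH _ (hu 1 (by omega))
    have hMg : 0 ≤ Mg := (norm_nonneg _).trans (hg 0 0)
    have hMH : 0 ≤ MH := (norm_nonneg _).trans hu1
    calc ‖gapProd H g (n + 1) u‖
        ≤ ‖g 0 (u 0 - u 1)‖ * ‖H (u 1)‖ *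
            ‖gapProd H (fun j => g (j + 1)) n (fun i => u (i + 1))‖ := norm_mul₃_le
      _ ≤ Mg * MH * (‖(1 : A)‖ * (Mg * MH) ^ n) := by
        refine mul_le_mul (mul_le_mul (hg _ _) hu1 (norm_nonneg _) hMg) ?_ (norm_nonneg _)
          (mul_nonneg hMg hMH)
        exact ih (fun j s => hg (j + 1) s) fun i hi => hu (i + 1) (by omega)
      _ = ‖(1 : A)‖ * (Mg * MH) ^ (n + 1) := by ring

variable {t₀ t Mg : ℝ}

theorem integrableOn_gapProd_cons (hH : Continuous H) (hgm : ∀ j, StronglyMeasurable (g j))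
    (hgb : ∀ j s, ‖g j s‖ ≤ Mg) {s : ℝ} (hs : s ∈ Set.Icc t₀ t) (n : ℕ) :
    IntegrableOn (fun v : Fin n → ℝ => gapProd H g n (zeroExtend (n + 1) (Fin.cons s v)))
      (cube t₀ t n) := by
  obtain ⟨MH, hMH⟩ := isCompact_Icc.exists_bound_of_continuousOn hH.continuousOn
  refine integrableOn_cube_of_norm_le ((stronglyMeasurable_gapProd hH.stronglyMeasurable hgm n
    ).comp_measurable (measurable_zeroExtend_cons s)) fun v hv => norm_gapProd_le hMH hgb
    fun i hi => zeroExtend_mem_Icc (cons_mem_cube.2 ⟨hs, hv⟩) (by omega)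

theorem integrableOn_chainProd (hH : Continuous H) (hgm : ∀ j, StronglyMeasurable (g j))
    (hgb : ∀ j s, ‖g j s‖ ≤ Mg) (n : ℕ) :
    IntegrableOn (fun u : Fin n → ℝ => chainProd H g n (zeroExtend n u)) (cube t₀ t n) := by
  cases n with
  | zero => exact integrableOn_const volume_cube_lt_top.ne
  | succ n =>
    obtain ⟨MH, hMH⟩ := isCompact_Icc.exists_bound_of_continuousOn hH.continuousOn
    refine integrableOn_cube_of_norm_le
      (((hH.stronglyMeasurable.comp_measurable (measurable_pi_apply 0)).mul
        (stronglyMeasurable_gapProd hH.stronglyMeasurable hgm n)).comp_measurable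
        (measurable_zeroExtend _)) (C := MH * (‖(1 : A)‖ * (Mg * MH) ^ n)) fun u hu => ?_
    exact norm_mul_le_of_le (hMH _ (zeroExtend_mem_Icc hu n.succ_pos))
      (norm_gapProd_le hMH hgb fun i hi => zeroExtend_mem_Icc hu (by omega))

end Integrability

noncomputable def heaviside {A : Type*} [Zero A] [One A] (s : ℝ) : A := if 0 < s then 1 else 0

section Heaviside

variable {A : Type*} [NormedRing A]

theorem stronglyMeasurable_heaviside : StronglyMeasurable (heaviside : ℝ → A) :=
  StronglyMeasurable.ite measurableSet_Ioi stronglyMeasurable_const stronglyMeasurable_const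

theorem norm_heaviside_le (s : ℝ) : ‖(heaviside s : A)‖ ≤ ‖(1 : A)‖ := by
  unfold heaviside
  split_ifs <;> simp

theorem heaviside_sub_mul (s x : ℝ) (B : A) :
    heaviside (s - x) * B = if x < s then B else 0 := by
  simp [heaviside, sub_pos, ite_mul]

end Heaviside

theorem setIntegral_Icc_ite_lt {G : Type*} [NormedAddCommGroup G] [NormedSpace ℝ G]
    {t₀ t s : ℝ} (hs : s ∈ Set.Icc t₀ t) (Φ : ℝ → G) :
    ∫ x in Set.Icc t₀ t, (if x < s then Φ x else 0) = ∫ x in t₀..s, Φ x := by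
  have hind : (fun x => if x < s then Φ x else 0) = (Set.Iio s).indicator Φ := by
    ext x
    simp [Set.indicator_apply]
  have hIco : Set.Icc t₀ t ∩ Set.Iio s = Set.Ico t₀ s := by
    ext x
    simp only [Set.mem_inter_iff, Set.mem_Icc, Set.mem_Iio, Set.mem_Ico]
    exact ⟨fun h => ⟨h.1.1, h.2⟩, fun h => ⟨⟨h.1, h.2.le.trans hs.2⟩, h.2⟩⟩
  rw [hind, setIntegral_indicator measurableSet_Iio, hIco, integral_Ico_eq_integral_Ioc,
    intervalIntegral.integral_of_le hs.1]

theorem list_prod_ofFn_cons {M : Type*} [Monoid M] (H : ℝ → M) {n : ℕ} (x : ℝ)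
    (w : Fin n → ℝ) :
    (List.ofFn fun i => H ((Fin.cons x w : Fin (n + 1) → ℝ) i)).prod =
      H x * (List.ofFn fun i => H (w i)).prod := by
  simp [List.ofFn_succ]

section TimeOrdering

variable {A : Type*} [NormedRing A] [NormedAlgebra ℝ A] [CompleteSpace A] {H : ℝ → A}
  {t₀ t : ℝ}

/-- The Heaviside factors cut the cube down to the simplex `s > v₀ > v₁ > ⋯`. The prefactor `a`
collects the factors peeled off so far; it is what makes the induction on `n` go through. -/
theorem setIntegral_cube_gapProd_heaviside (hH : Continuous H) (n : ℕ) (a : A) {s : ℝ}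
    (hs : s ∈ Set.Icc t₀ t) :
    ∫ v in cube t₀ t n,
        a * gapProd H (fun _ => heaviside) n (zeroExtend (n + 1) (Fin.cons s v)) =
      nested n (fun w => a * (List.ofFn fun i => H (w i)).prod) t₀ s := by
  induction n generalizing a s with
  | zero =>
    simp only [gapProd, mul_one, setIntegral_cube_zero, nested, List.ofFn_zero, List.prod_nil]
  | succ n ih =>
    have hint := (integrableOn_gapProd_cons hH (fun _ => stronglyMeasurable_heaviside)
      (fun _ => norm_heaviside_le) hs (n + 1)).const_mul a
    rw [setIntegral_cube_succ hint]
    have inner : ∀ x ∈ Set.Icc t₀ t,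
        ∫ w in cube t₀ t n, a * gapProd H (fun _ => heaviside) (n + 1)
          (zeroExtend (n + 2) (Fin.cons s (Fin.cons x w))) =
        if x < s then nested n (fun w => a * H x * (List.ofFn fun i => H (w i)).prod) t₀ x
        else 0 := by
      intro x hx
      have hpt : ∀ w : Fin n → ℝ, a * gapProd H (fun _ => heaviside) (n + 1)
          (zeroExtend (n + 2) (Fin.cons s (Fin.cons x w))) =
          if x < s then a * H x *
            gapProd H (fun _ => heaviside) n (zeroExtend (n + 1) (Fin.cons x w)) else 0 := by
        intro w
        change a * (heaviside (s - x) * H x *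
          gapProd H (fun _ => heaviside) n (zeroExtend (n + 1) (Fin.cons x w))) = _
        rw [mul_assoc, heaviside_sub_mul]
        split_ifs <;> simp [mul_assoc]
      simp_rw [hpt]
      split_ifs
      · exact ih (a * H x) hx
      · exact integral_zero _ _
    rw [setIntegral_congr_fun measurableSet_Icc inner, setIntegral_Icc_ite_lt hs]
    simp only [nested, list_prod_ofFn_cons, mul_assoc]

noncomputable def chainIntegral (H : ℝ → A) (g : ℕ → ℝ → A) (t₀ t : ℝ) (n : ℕ) :
    A :=
  ∫ u in cube t₀ t n, chainProd H g n (zeroExtend n u)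

theorem chainIntegral_heaviside_succ (hH : Continuous H) (ht : t₀ ≤ t) (n : ℕ) :
    chainIntegral H (fun _ => heaviside) t₀ t (n + 1) =
      nested (n + 1) (fun w => (List.ofFn fun i => H (w i)).prod) t₀ t := by
  rw [chainIntegral, setIntegral_cube_succ (integrableOn_chainProd hH
    (fun _ => stronglyMeasurable_heaviside) (fun _ => norm_heaviside_le) (n + 1))]
  have inner : ∀ x ∈ Set.Icc t₀ t, ∫ v in cube t₀ t n,
      chainProd H (fun _ => heaviside) (n + 1) (zeroExtend (n + 1) (Fin.cons x v)) =
      nested n (fun w => H x * (List.ofFn fun i => H (w i)).prod) t₀ x :=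
    fun x hx => setIntegral_cube_gapProd_heaviside hH n (H x) hx
  rw [setIntegral_congr_fun measurableSet_Icc inner, integral_Icc_eq_integral_Ioc,
    ← intervalIntegral.integral_of_le ht]
  simp only [nested, list_prod_ofFn_cons]

end TimeOrdering

section Telescoping

variable {A : Type*} [NormedRing A] {H : ℝ → A} {t₀ t : ℝ} (p : A)

/-- Interpolates between the gaps `heaviside` (`c = 0`) and `heaviside - p` of a chain of
length `n` (`c = n - 1`). -/
noncomputable def mixedGap (c j : ℕ) (s : ℝ) : A := heaviside s - if j < c then p else 0

theorem mixedGap_zero : mixedGap p 0 = fun _ => heaviside := by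
  funext j s
  simp [mixedGap]

theorem integrableOn_chainProd_heaviside_sub (hH : Continuous H) {q : ℕ → A} {M : ℝ}
    (hq : ∀ j, ‖q j‖ ≤ M) (n : ℕ) :
    IntegrableOn (fun u => chainProd H (fun j s => heaviside s - q j) n (zeroExtend n u))
      (cube t₀ t n) :=
  integrableOn_chainProd hH (fun _ => stronglyMeasurable_heaviside.sub stronglyMeasurable_const)
    (fun j s => (norm_sub_le _ _).trans (add_le_add (norm_heaviside_le s) (hq j))) n

theorem chainProd_mixedGap_succ_sub (c : ℕ) {k : ℕ} (hk : 0 < k) (u : ℕ → ℝ) :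
    chainProd H (mixedGap p (c + 1)) (c + 1 + k) u - chainProd H (mixedGap p c) (c + 1 + k) u =
      -(chainProd H (fun _ s => heaviside s - p) (c + 1) u * p *
        chainProd H (fun _ => heaviside) k (fun i => u (i + (c + 1)))) := by
  have hprefix (c' : ℕ) (hc' : c ≤ c') :
      chainProd H (mixedGap p c') (c + 1) u = chainProd H (fun _ s => heaviside s - p) (c + 1) u :=
    chainProd_congr (fun j hj => by funext s; simp [mixedGap, show j < c' by omega])
      fun _ _ => rfl
  have hsuffix (c' : ℕ) (hc' : c' ≤ c + 1) :
      (fun j => mixedGap p c' (j + (c + 1))) = fun _ => heaviside := by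
    funext j s
    simp [mixedGap, show ¬j + (c + 1) < c' by omega]
  rw [chainProd_add _ c hk, chainProd_add _ c hk, hprefix c le_rfl, hprefix (c + 1) c.le_succ,
    hsuffix c c.le_succ, hsuffix (c + 1) le_rfl]
  simp only [mixedGap, lt_add_one, lt_irrefl, if_true, if_false, sub_zero]
  noncomm_ring

variable [NormedAlgebra ℝ A] [CompleteSpace A]

theorem chainIntegral_mixedGap_succ (hH : Continuous H) (c : ℕ) {k : ℕ} (hk : 0 < k) :
    chainIntegral H (mixedGap p (c + 1)) t₀ t (c + 1 + k) =
      chainIntegral H (mixedGap p c) t₀ t (c + 1 + k) -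
        chainIntegral H (fun _ s => heaviside s - p) t₀ t (c + 1) * p *
          chainIntegral H (fun _ => heaviside) t₀ t k := by
  have hC := integrableOn_chainProd_heaviside_sub hH (q := fun _ => p) (fun _ => le_rfl)
    (t₀ := t₀) (t := t) (c + 1)
  have hU := integrableOn_chainProd hH (fun _ => stronglyMeasurable_heaviside)
    (fun _ => norm_heaviside_le) (t₀ := t₀) (t := t) k
  have hmixed (c' : ℕ) : IntegrableOn
      (fun u => chainProd H (mixedGap p c') (c + 1 + k) (zeroExtend _ u))
      (cube t₀ t (c + 1 + k)) :=
    integrableOn_chainProd_heaviside_sub hH (M := ‖p‖) (fun j => by split_ifs <;> simp) _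
  have hpt : ∀ u : Fin (c + 1 + k) → ℝ,
      chainProd H (mixedGap p (c + 1)) (c + 1 + k) (zeroExtend _ u) -
        chainProd H (mixedGap p c) (c + 1 + k) (zeroExtend _ u) =
      -(chainProd H (fun _ s => heaviside s - p) (c + 1)
          (zeroExtend _ fun i => u (Fin.castAdd k i)) * p *
        chainProd H (fun _ => heaviside) k (zeroExtend _ fun i => u (Fin.natAdd (c + 1) i))) := by
    intro u
    have hprefix : chainProd H (fun _ s => heaviside s - p) (c + 1) (zeroExtend _ u) =
        chainProd H (fun _ s => heaviside s - p) (c + 1)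
          (zeroExtend _ fun i => u (Fin.castAdd k i)) :=
      chainProd_congr (fun _ _ => rfl) fun i hi => by
        rw [zeroExtend_of_lt _ (by omega), zeroExtend_of_lt _ hi]
        rfl
    have hsuffix : chainProd H (fun _ => heaviside) k (fun i => zeroExtend _ u (i + (c + 1))) =
        chainProd H (fun _ => heaviside) k (zeroExtend _ fun i => u (Fin.natAdd (c + 1) i)) :=
      chainProd_congr (fun _ _ => rfl) fun i hi => by
        rw [zeroExtend_of_lt _ (by omega), zeroExtend_of_lt _ hi]
        congr 1
        ext
        simp only [Fin.natAdd]
        omega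
    rw [chainProd_mixedGap_succ_sub p c hk, hprefix, hsuffix]
  have hdiff : chainIntegral H (mixedGap p (c + 1)) t₀ t (c + 1 + k) -
      chainIntegral H (mixedGap p c) t₀ t (c + 1 + k) =
      -(chainIntegral H (fun _ s => heaviside s - p) t₀ t (c + 1) * p *
        chainIntegral H (fun _ => heaviside) t₀ t k) := by
    rw [chainIntegral, chainIntegral, ← integral_sub (hmixed (c + 1)) (hmixed c),
      setIntegral_congr_fun measurableSet_cube fun u _ => hpt u, integral_neg,
      setIntegral_cube_add_mul (hC.mul_const p) hU, integral_mul_const_of_integrable hC]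
    rfl
  rw [sub_eq_iff_eq_add] at hdiff
  rw [hdiff]
  abel

theorem chainIntegral_heaviside_sub (hH : Continuous H) (n : ℕ) :
    chainIntegral H (fun _ s => heaviside s - p) t₀ t n =
      chainIntegral H (fun _ => heaviside) t₀ t n -
        ∑ i ∈ Finset.Ico 1 n, chainIntegral H (fun _ s => heaviside s - p) t₀ t i * p *
          chainIntegral H (fun _ => heaviside) t₀ t (n - i) := by
  cases n with
  | zero => simp [chainIntegral, chainProd]
  | succ n =>
    have interpolate : ∀ c ≤ n, chainIntegral H (mixedGap p c) t₀ t (n + 1) =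
        chainIntegral H (fun _ => heaviside) t₀ t (n + 1) -
          ∑ i ∈ Finset.Ico 1 (c + 1), chainIntegral H (fun _ s => heaviside s - p) t₀ t i * p *
            chainIntegral H (fun _ => heaviside) t₀ t (n + 1 - i) := by
      intro c
      induction c with
      | zero => simp [mixedGap_zero]
      | succ c ih =>
        intro hc
        have step := chainIntegral_mixedGap_succ p hH (t₀ := t₀) (t := t) c
          (k := n - c) (by omega)
        rw [show c + 1 + (n - c) = n + 1 by omega] at step
        rw [step, ih (by omega), Finset.sum_Ico_succ_top (show 1 ≤ c + 1 by omega),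
          show n + 1 - (c + 1) = n - c by omega, sub_sub]
    rw [← interpolate n le_rfl, chainIntegral, chainIntegral]
    refine setIntegral_congr_fun measurableSet_cube fun u _ => chainProd_congr
      (fun j hj => ?_) fun _ _ => rfl
    funext s
    simp [mixedGap, show j < n by omega]

end Telescoping

theorem pow_smul_mul_mul_pow_smul {R A : Type*} [CommSemiring R] [Semiring A] [Algebra R A]
    (z : R) {i n : ℕ} (h : i ≤ n) (X P Y : A) :
    (z ^ i • X) * P * (z ^ (n - i) • Y) = z ^ n • (X * P * Y) := by
  rw [smul_mul_assoc, smul_mul_assoc, mul_smul_comm, smul_smul, ← pow_add, Nat.add_sub_cancel' h]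

section Operators

variable {F : Type*} [NormedAddCommGroup F] [NormedSpace ℂ F]

theorem thetaP_eq_heaviside_sub (P : F →L[ℂ] F) : thetaP P = fun s => heaviside s - P := by
  funext s
  unfold thetaP heaviside
  split_ifs <;> simp

theorem Cterm_eq_smul_chainIntegral (H : ℝ → F →L[ℂ] F) (P : F →L[ℂ] F) (t₀ t : ℝ) (n : ℕ) :
    Cterm H P t₀ t n = (-Complex.I) ^ n • chainIntegral H (fun _ s => heaviside s - P) t₀ t n := by
  simp only [Cterm, chainIntegral, list_prod_ofFn_eq_chainProd]
  rw [thetaP_eq_heaviside_sub]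
  rfl

theorem Uterm_eq_smul_chainIntegral [CompleteSpace F] {H : ℝ → F →L[ℂ] F} (hH : Continuous H)
    {t₀ t : ℝ} (ht : t₀ ≤ t) {n : ℕ} (hn : 1 ≤ n) :
    Uterm H t₀ t n = (-Complex.I) ^ n • chainIntegral H (fun _ => heaviside) t₀ t n := by
  obtain ⟨n, rfl⟩ := Nat.exists_eq_add_of_le' hn
  rw [Uterm, chainIntegral_heaviside_succ hH ht]

end Operators

end Dyson

theorem Uterm_eq_Cterm_add_sum_general (H : ℝ → E →L[ℂ] E) (hH : Continuous H)
    (P : E →L[ℂ] E) (t₀ t : ℝ) (hle : t₀ ≤ t)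
    (n : ℕ) (hn : 1 ≤ n) :
    Uterm H t₀ t n =
      Cterm H P t₀ t n +
        ∑ i ∈ Finset.Ico 1 n, Cterm H P t₀ t i * P * Uterm H t₀ t (n - i) := by
  have hterm : ∀ i ∈ Finset.Ico 1 n, Cterm H P t₀ t i * P * Uterm H t₀ t (n - i) =
      (-Complex.I) ^ n •
        (Dyson.chainIntegral H (fun _ s => Dyson.heaviside s - P) t₀ t i * P *
          Dyson.chainIntegral H (fun _ => Dyson.heaviside) t₀ t (n - i)) := by
    intro i hi
    rw [Finset.mem_Ico] at hi
    rw [Dyson.Cterm_eq_smul_chainIntegral, Dyson.Uterm_eq_smul_chainIntegral hH hle (by omega),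
      Dyson.pow_smul_mul_mul_pow_smul _ hi.2.le]
  rw [Finset.sum_congr rfl hterm, ← Finset.smul_sum, Dyson.Cterm_eq_smul_chainIntegral,
    Dyson.chainIntegral_heaviside_sub P hH, Dyson.Uterm_eq_smul_chainIntegral hH hle hn, smul_sub,
    sub_add_cancel]

/-- For every `n ≥ 1`:
`Uₙ(t,t₀) = Cₙ(t,t₀) + Σ_{i=1}^{n−1} Cᵢ(t,t₀) P U_{n−i}(t,t₀)`
(for `n = 1` the sum on the right-hand side is empty). -/
theorem Uterm_eq_Cterm_add_sum (H : ℝ → E →L[ℂ] E) (hH : Continuous H)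
    (P : E →L[ℂ] E) (hP : P * P = P) (t₀ t : ℝ) (hle : t₀ ≤ t)
    (n : ℕ) (hn : 1 ≤ n) :
    Uterm H t₀ t n =
      Cterm H P t₀ t n +
        ∑ i ∈ Finset.Ico 1 n, Cterm H P t₀ t i * P * Uterm H t₀ t (n - i) :=
  Uterm_eq_Cterm_add_sum_general H hH P t₀ t hle n hn
end

section
/- If two lists I = (i₁,…,iₙ) and J = (j₁,…,jₙ) of distinct integers have the same ordering, i.e. i_k < i_l if and only if j_k < j_l for all k, l ∈ {1,…,n}, then φ(I) = φ(J). -/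
/-- The minimum of `a :: l` (computed by folding `min`) is a member of `a :: l`. -/
lemma foldr_min_mem (a : ℤ) : ∀ l : List ℤ, l.foldr min a ∈ a :: l := by
  intro l
  induction l with
  | nil => simp
  | cons b l ih =>
    simp only [List.foldr_cons]
    rcases min_choice b (l.foldr min a) with h | h
    · rw [h]; simp
    · rw [h]
      rcases List.mem_cons.mp ih with h' | h'
      · simp [h']
      · simp [h']

/-- The planar binary tree `φ(I)` associated to a list `I` of (distinct) integers:
`φ` of the empty list is the empty tree `|`, and `φ(I) = φ(I₁) ∨ φ(I₂)` where
`I = I₁ · (min I) · I₂` is the splitting of `I` at its minimal entry. -/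
def phi : List ℤ → Tree Unit
  | [] => Tree.nil
  | a :: l =>
    Tree.node ()
      (phi ((a :: l).take ((a :: l).idxOf (l.foldr min a))))
      (phi ((a :: l).drop ((a :: l).idxOf (l.foldr min a) + 1)))
termination_by l => l.length
decreasing_by
  · have hm := foldr_min_mem a l
    have hk := List.idxOf_lt_length_iff.mpr hm
    simp only [List.length_take, List.length_cons] at *
    first
      | omega
      | (simp only [List.foldr_attach] at *; omega)
      | (simp [List.foldr_attach] at *; omega)
  · simp only [List.length_drop, List.length_cons]
    omega

/-- The standardization of a list `I` of distinct integers: the list whose `j`-th entry is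
the (1-indexed) position of `I_j` in the increasing ordering of the entries of `I`. -/
def stdz (I : List ℤ) : List ℤ :=
  I.map (fun x => ((I.filter (fun y => y < x)).length : ℤ) + 1)

/-- `l` is (the list of values of) a permutation of `{1, …, n}`. -/
def IsPermList (n : ℕ) (l : List ℤ) : Prop :=
  l.Perm ((List.range n).map (fun k => (k : ℤ) + 1))

/-- `S_T`: the set of permutations `σ ∈ S_{|T|}` (identified with their lists of values
`(σ(1),…,σ(n))`) such that `φ(σ) = T`. -/
def STree (T : Tree Unit) : Set (List ℤ) :=
  {l | IsPermList T.numNodes l ∧ phi l = T}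

/-! The entry at which `φ` splits a list is found by `idxOf`, i.e. it is the *first* occurrence
of a least entry. That position is characterised by strict comparisons between entries alone,
so two lists with the same ordering are split at the same place, into pieces that again have the
same ordering. -/

namespace List

variable {α β : Type*}

def IsFirstMinIndex [LT α] (L : List α) (k : ℕ) : Prop :=
  ∃ hk : k < L.length, (∀ j (hj : j < L.length), ¬ L[j] < L[k]) ∧ ∀ j (hj : j < k), L[k] < L[j]

def SameOrdering [LT α] [LT β] (I : List α) (J : List β) : Prop :=
  ∃ hlen : I.length = J.length, ∀ i j (hi : i < I.length) (hj : j < I.length),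
    I[i] < I[j] ↔ J[i]'(hlen ▸ hi) < J[j]'(hlen ▸ hj)

theorem IsFirstMinIndex.unique [LT α] {L : List α} {k k' : ℕ} (h : L.IsFirstMinIndex k)
    (h' : L.IsFirstMinIndex k') : k = k' := by
  obtain ⟨hk, hmin, hfirst⟩ := h
  obtain ⟨hk', hmin', hfirst'⟩ := h'
  by_contra hne
  rcases Nat.lt_or_gt_of_ne hne with hlt | hlt
  · exact hmin k' hk' (hfirst' k hlt)
  · exact hmin' k hk (hfirst k' hlt)

theorem foldr_min_le [LinearOrder α] (a : α) (l : List α) : ∀ x ∈ a :: l, l.foldr min a ≤ x := by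
  induction l generalizing a with
  | nil => simp
  | cons b l ih =>
    intro x hx
    rw [foldr_cons]
    rcases mem_cons.mp hx with rfl | hx
    · exact (min_le_right _ _).trans (ih x x mem_cons_self)
    rcases mem_cons.mp hx with rfl | hx
    · exact min_le_left _ _
    · exact (min_le_right _ _).trans (ih a x (mem_cons_of_mem _ hx))

theorem isFirstMinIndex_idxOf_foldr_min (a : ℤ) (l : List ℤ) :
    (a :: l).IsFirstMinIndex ((a :: l).idxOf (l.foldr min a)) := by
  have hk := idxOf_lt_length_of_mem (foldr_min_mem a l)
  refine ⟨hk, fun j hj => ?_, fun j hj => ?_⟩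
  · rw [getElem_idxOf hk, not_lt]
    exact foldr_min_le a l _ (getElem_mem hj)
  · have hne : (a :: l)[j] ≠ l.foldr min a := by
      simpa using not_of_lt_findIdx hj
    rw [getElem_idxOf hk]
    exact lt_of_le_of_ne (foldr_min_le a l _ (getElem_mem _)) hne.symm

namespace SameOrdering

variable [LT α] [LT β] {I : List α} {J : List β}

theorem length_eq (h : SameOrdering I J) : I.length = J.length := h.1

theorem isFirstMinIndex (h : SameOrdering I J) {k : ℕ} (hI : I.IsFirstMinIndex k) :
    J.IsFirstMinIndex k := by
  obtain ⟨hlen, hlt⟩ := h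
  obtain ⟨hk, hmin, hfirst⟩ := hI
  refine ⟨hlen ▸ hk, fun j hj => ?_, fun j hj => ?_⟩
  · exact (hlt j k (hlen ▸ hj) hk).not.mp (hmin j _)
  · exact (hlt k j hk (by omega)).mp (hfirst j hj)

theorem take (h : SameOrdering I J) (n : ℕ) : SameOrdering (I.take n) (J.take n) := by
  obtain ⟨hlen, hlt⟩ := h
  refine ⟨by simp [hlen], fun i j hi hj => ?_⟩
  simp only [length_take] at hi hj
  simpa using hlt i j (by omega) (by omega)

theorem drop (h : SameOrdering I J) (n : ℕ) : SameOrdering (I.drop n) (J.drop n) := by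
  obtain ⟨hlen, hlt⟩ := h
  refine ⟨by simp [hlen], fun i j hi hj => ?_⟩
  simp only [length_drop] at hi hj
  simpa using hlt (n + i) (n + j) (by omega) (by omega)

end SameOrdering

end List

open List in
theorem List.SameOrdering.phi_eq {I J : List ℤ} (h : SameOrdering I J) : phi I = phi J := by
  match I, J, h with
  | [], [], _ => rfl
  | [], _ :: _, h | _ :: _, [], h => simpa using h.length_eq
  | a :: l, b :: m, h =>
    have hk := (isFirstMinIndex_idxOf_foldr_min b m).unique
      (h.isFirstMinIndex (isFirstMinIndex_idxOf_foldr_min a l))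
    rw [phi, phi, ← hk]
    exact congrArg₂ _ (h.take _).phi_eq (h.drop _).phi_eq
termination_by I.length
decreasing_by
  all_goals
    have := idxOf_lt_length_of_mem (foldr_min_mem a l)
    simp only [length_take, length_drop]
    omega

theorem phi_eq_of_same_ordering_general (I J : List ℤ)
    (hlen : I.length = J.length)
    (h : ∀ k l : Fin I.length,
      I.get k < I.get l ↔ J.get (Fin.cast hlen k) < J.get (Fin.cast hlen l)) :
    phi I = phi J :=
  List.SameOrdering.phi_eq ⟨hlen, fun i j hi hj => h ⟨i, hi⟩ ⟨j, hj⟩⟩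

/-- If two lists `I` and `J` of distinct integers have the same length and the same
ordering (i.e. `I_k < I_l ↔ J_k < J_l` for all indices `k, l`), then `φ(I) = φ(J)`. -/
theorem phi_eq_of_same_ordering (I J : List ℤ) (hI : I.Nodup) (hJ : J.Nodup)
    (hlen : I.length = J.length)
    (h : ∀ k l : Fin I.length,
      I.get k < I.get l ↔ J.get (Fin.cast hlen k) < J.get (Fin.cast hlen l)) :
    phi I = phi J :=
  phi_eq_of_same_ordering_general I J hlen h
end

section
/- Let σ ∈ S_n, let F : {1,…,n+1} → ℂ be an arbitrary function, and let 1 ≤ k ≤ n. Then Σ_{l=n−k+1}^{n} ( F(σ⁻¹(l)) − F(σ⁻¹(l)+1) ) = Σ_{j ∈ S^<_σ(n−k+1)} F(j) − Σ_{j ∈ S^>_σ(n−k+1)} F(j). -/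
/-- The extended sequence `σ̄` of length `n+2` attached to `σ ∈ S_n`:
`σ̄(1) = σ̄(n+2) = 0` and `σ̄(i) = σ(i−1)` for `2 ≤ i ≤ n+1` (everything 1-indexed,
a permutation of `Fin n` being identified with the sequence of values
`σ(1), …, σ(n) ∈ {1,…,n}`). -/
def sbar {n : ℕ} (σ : Equiv.Perm (Fin n)) (i : ℕ) : ℕ :=
  if h : 2 ≤ i ∧ i ≤ n + 1 then (σ ⟨i - 2, by omega⟩ : ℕ) + 1 else 0

/-- `S^<_σ(k) = {i : 1 ≤ i ≤ n+1, σ̄(i) < k ≤ σ̄(i+1)}`. -/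
def Sless {n : ℕ} (σ : Equiv.Perm (Fin n)) (k : ℕ) : Finset ℕ :=
  (Finset.Icc 1 (n + 1)).filter (fun i => sbar σ i < k ∧ k ≤ sbar σ (i + 1))

/-- `S^>_σ(k) = {i : 1 ≤ i ≤ n+1, σ̄(i) ≥ k > σ̄(i+1)}`. -/
def Sgtr {n : ℕ} (σ : Equiv.Perm (Fin n)) (k : ℕ) : Finset ℕ :=
  (Finset.Icc 1 (n + 1)).filter (fun i => k ≤ sbar σ i ∧ sbar σ (i + 1) < k)

/-- The inverse permutation, 1-indexed: `σ⁻¹(l) ∈ {1,…,n}` for `l ∈ {1,…,n}`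
(junk value `0` out of range). -/
def pinv {n : ℕ} (σ : Equiv.Perm (Fin n)) (l : ℕ) : ℕ :=
  if h : 1 ≤ l ∧ l ≤ n then (σ.symm ⟨l - 1, by omega⟩ : ℕ) + 1 else 0

lemma pinv_eq {n : ℕ} (σ : Equiv.Perm (Fin n)) {l : ℕ} (h1 : 1 ≤ l) (h2 : l ≤ n) :
    pinv σ l = (σ.symm ⟨l - 1, by omega⟩ : ℕ) + 1 := by
  unfold pinv; rw [dif_pos ⟨h1, h2⟩]

lemma sbar_succ {n : ℕ} (σ : Equiv.Perm (Fin n)) {j : ℕ} (h1 : 1 ≤ j) (h2 : j ≤ n) :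
    sbar σ (j + 1) = (σ ⟨j - 1, by omega⟩ : ℕ) + 1 := by
  unfold sbar; rw [dif_pos (by omega)]
  congr 2

lemma sbar_eq {n : ℕ} (σ : Equiv.Perm (Fin n)) {j : ℕ} (h1 : 2 ≤ j) (h2 : j ≤ n + 1) :
    sbar σ j = (σ ⟨j - 2, by omega⟩ : ℕ) + 1 := by
  unfold sbar; rw [dif_pos ⟨h1, h2⟩]

/-- For `σ ∈ S_n`, `F : {1,…,n+1} → ℂ` and `1 ≤ k ≤ n`:
`Σ_{l=n−k+1}^{n} (F(σ⁻¹(l)) − F(σ⁻¹(l)+1)) = Σ_{j ∈ S^<_σ(n−k+1)} F(j) − Σ_{j ∈ S^>_σ(n−k+1)} F(j)`. -/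
theorem sum_sub_eq_sum_Sless_sub_sum_Sgtr {n : ℕ} (σ : Equiv.Perm (Fin n)) (F : ℕ → ℂ)
    (k : ℕ) (hk : 1 ≤ k) (hk' : k ≤ n) :
    ∑ l ∈ Finset.Icc (n - k + 1) n, (F (pinv σ l) - F (pinv σ l + 1)) =
      ∑ j ∈ Sless σ (n - k + 1), F j - ∑ j ∈ Sgtr σ (n - k + 1), F j := by
  set m := n - k + 1 with hm
  have hm1 : 1 ≤ m := by omega
  have hmn : m ≤ n := by omega
  rw [Finset.sum_sub_distrib]
  have hA : ∑ l ∈ Finset.Icc m n, F (pinv σ l) =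
      ∑ j ∈ Finset.Icc 1 (n + 1), if m ≤ sbar σ (j + 1) then F j else 0 := by
    rw [← Finset.sum_filter]
    refine Finset.sum_nbij' (i := fun l => pinv σ l) (j := fun j => sbar σ (j + 1))
      ?_ ?_ ?_ ?_ ?_
    · intro l hl
      simp only [Finset.mem_Icc] at hl
      have h1 : 1 ≤ l := by omega
      have h2 : l ≤ n := hl.2
      rw [pinv_eq σ h1 h2]
      have hlt := (σ.symm ⟨l - 1, by omega⟩).isLt
      rw [Finset.mem_filter, Finset.mem_Icc]
      refine ⟨⟨by omega, by omega⟩, ?_⟩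
      rw [sbar_succ σ (by omega) (by omega)]
      have : (⟨(σ.symm ⟨l - 1, by omega⟩ : ℕ) + 1 - 1, by omega⟩ : Fin n) =
          σ.symm ⟨l - 1, by omega⟩ := Fin.ext (by simp)
      rw [this, Equiv.apply_symm_apply]
      simp; omega
    · intro j hj
      rw [Finset.mem_filter, Finset.mem_Icc] at hj
      obtain ⟨⟨hj1, hj2⟩, hjm⟩ := hj
      have hjn : j ≤ n := by
        by_contra h
        have : j = n + 1 := by omega
        subst this
        have : sbar σ (n + 1 + 1) = 0 := by unfold sbar; rw [dif_neg (by omega)]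
        omega
      rw [sbar_succ σ hj1 hjn]
      rw [Finset.mem_Icc]
      have := (σ ⟨j - 1, by omega⟩).isLt
      constructor
      · rw [← sbar_succ σ hj1 hjn]; exact hjm
      · omega
    · intro l hl
      simp only [Finset.mem_Icc] at hl
      have h1 : 1 ≤ l := by omega
      have h2 : l ≤ n := hl.2
      rw [pinv_eq σ h1 h2, sbar_succ σ (by omega) (by have := (σ.symm ⟨l-1, by omega⟩).isLt; omega)]
      have : (⟨(σ.symm ⟨l - 1, by omega⟩ : ℕ) + 1 - 1, by omega⟩ : Fin n) =
          σ.symm ⟨l - 1, by omega⟩ := Fin.ext (by simp)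
      rw [this, Equiv.apply_symm_apply]
      simp; omega
    · intro j hj
      rw [Finset.mem_filter, Finset.mem_Icc] at hj
      obtain ⟨⟨hj1, hj2⟩, hjm⟩ := hj
      have hjn : j ≤ n := by
        by_contra h
        have : j = n + 1 := by omega
        subst this
        have : sbar σ (n + 1 + 1) = 0 := by unfold sbar; rw [dif_neg (by omega)]
        omega
      rw [sbar_succ σ hj1 hjn]
      have := (σ ⟨j - 1, by omega⟩).isLt
      rw [pinv_eq σ (by omega) (by omega)]
      have : (⟨(σ ⟨j - 1, by omega⟩ : ℕ) + 1 - 1, by omega⟩ : Fin n) =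
          σ ⟨j - 1, by omega⟩ := Fin.ext (by simp)
      rw [this, Equiv.symm_apply_apply]
      simp; omega
    · intro l hl; rfl
  have hB : ∑ l ∈ Finset.Icc m n, F (pinv σ l + 1) =
      ∑ j ∈ Finset.Icc 1 (n + 1), if m ≤ sbar σ j then F j else 0 := by
    rw [← Finset.sum_filter]
    refine Finset.sum_nbij' (i := fun l => pinv σ l + 1) (j := fun j => sbar σ j)
      ?_ ?_ ?_ ?_ ?_
    · intro l hl
      simp only [Finset.mem_Icc] at hl
      have h1 : 1 ≤ l := by omega
      have h2 : l ≤ n := hl.2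
      rw [pinv_eq σ h1 h2]
      have hlt := (σ.symm ⟨l - 1, by omega⟩).isLt
      rw [Finset.mem_filter, Finset.mem_Icc]
      refine ⟨⟨by omega, by omega⟩, ?_⟩
      rw [sbar_eq σ (by omega) (by omega)]
      have : (⟨(σ.symm ⟨l - 1, by omega⟩ : ℕ) + 1 + 1 - 2, by omega⟩ : Fin n) =
          σ.symm ⟨l - 1, by omega⟩ := Fin.ext (by simp)
      rw [this, Equiv.apply_symm_apply]
      simp; omega
    · intro j hj
      rw [Finset.mem_filter, Finset.mem_Icc] at hj
      obtain ⟨⟨hj1, hj2⟩, hjm⟩ := hj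
      have hj2' : 2 ≤ j := by
        by_contra h
        have : j = 1 := by omega
        subst this
        have : sbar σ 1 = 0 := by unfold sbar; rw [dif_neg (by omega)]
        omega
      rw [sbar_eq σ hj2' hj2]
      rw [Finset.mem_Icc]
      have := (σ ⟨j - 2, by omega⟩).isLt
      constructor
      · rw [← sbar_eq σ hj2' hj2]; exact hjm
      · omega
    · intro l hl
      simp only [Finset.mem_Icc] at hl
      have h1 : 1 ≤ l := by omega
      have h2 : l ≤ n := hl.2
      rw [pinv_eq σ h1 h2]
      have hlt := (σ.symm ⟨l - 1, by omega⟩).isLt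
      rw [sbar_eq σ (by omega) (by omega)]
      have : (⟨(σ.symm ⟨l - 1, by omega⟩ : ℕ) + 1 + 1 - 2, by omega⟩ : Fin n) =
          σ.symm ⟨l - 1, by omega⟩ := Fin.ext (by simp)
      rw [this, Equiv.apply_symm_apply]
      simp; omega
    · intro j hj
      rw [Finset.mem_filter, Finset.mem_Icc] at hj
      obtain ⟨⟨hj1, hj2⟩, hjm⟩ := hj
      have hj2' : 2 ≤ j := by
        by_contra h
        have : j = 1 := by omega
        subst this
        have : sbar σ 1 = 0 := by unfold sbar; rw [dif_neg (by omega)]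
        omega
      rw [sbar_eq σ hj2' hj2]
      have := (σ ⟨j - 2, by omega⟩).isLt
      rw [pinv_eq σ (by omega) (by omega)]
      have : (⟨(σ ⟨j - 2, by omega⟩ : ℕ) + 1 - 1, by omega⟩ : Fin n) =
          σ ⟨j - 2, by omega⟩ := Fin.ext (by simp)
      rw [this, Equiv.symm_apply_apply]
      simp; omega
    · intro l hl; rfl
  rw [hA, hB, Sless, Sgtr, Finset.sum_filter, Finset.sum_filter,
    ← Finset.sum_sub_distrib, ← Finset.sum_sub_distrib]
  apply Finset.sum_congr rfl
  intro j hj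
  by_cases h1 : m ≤ sbar σ j <;> by_cases h2 : m ≤ sbar σ (j + 1) <;>
    simp [h1, h2, Nat.lt_of_not_le, Nat.not_lt.mpr, not_lt_of_ge]
end

section
/- Let σ ∈ S_n, δ > 0, ε ≥ 0, and F : {1,…,n+1} → ℝ. Call an index i ∈ {1,…,n+1} Q-type if i = 1 or (2 ≤ i ≤ n and σ(i) > σ(i−1)), and P-type if i = n+1 or (2 ≤ i ≤ n and σ(i) < σ(i−1)). Assume F(i) − F(j) ≥ δ whenever i is Q-type and j is P-type. For 1 ≤ k ≤ n set X_σ(k) := kε + i·Σ_{l=n−k+1}^{n} ( F(σ⁻¹(l)) − F(σ⁻¹(l)+1) ) ∈ ℂ, and let n_k := |S^<_σ(n−k+1)|. Then |X_σ(k)|² ≥ k²ε² + n_k² δ², and in particular |X_σ(k)| ≥ δ. -/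
/-- The permutation values, 1-indexed: `σ(i) ∈ {1,…,n}` for `i ∈ {1,…,n}`
(junk value `0` out of range). -/
def sval {n : ℕ} (σ : Equiv.Perm (Fin n)) (i : ℕ) : ℕ :=
  if h : 1 ≤ i ∧ i ≤ n then (σ ⟨i - 1, by omega⟩ : ℕ) + 1 else 0

/-- An index `i ∈ {1,…,n+1}` is Q-type when `i = 1` or `2 ≤ i ≤ n` and `σ(i) > σ(i−1)`. -/
def QType {n : ℕ} (σ : Equiv.Perm (Fin n)) (i : ℕ) : Prop :=
  i = 1 ∨ (2 ≤ i ∧ i ≤ n ∧ sval σ (i - 1) < sval σ i)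

/-- An index `i ∈ {1,…,n+1}` is P-type when `i = n+1` or `2 ≤ i ≤ n` and `σ(i) < σ(i−1)`. -/
def PType {n : ℕ} (σ : Equiv.Perm (Fin n)) (i : ℕ) : Prop :=
  i = n + 1 ∨ (2 ≤ i ∧ i ≤ n ∧ sval σ i < sval σ (i - 1))

open Finset

theorem Finset.card_nsmul_le_sum_sub_sum {ι M : Type*} [AddCommGroup M] [PartialOrder M]
    [IsOrderedAddMonoid M] {s t : Finset ι} {f : ι → M} {δ : M} (hst : #s = #t)
    (h : ∀ i ∈ s, ∀ j ∈ t, δ ≤ f i - f j) :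
    #s • δ ≤ ∑ i ∈ s, f i - ∑ j ∈ t, f j := by
  let e : s ≃ t := s.equivOfCardEq hst
  rw [← sum_coe_sort s, ← sum_coe_sort t, ← e.sum_comp, ← sum_sub_distrib, ← card_attach]
  exact card_nsmul_le_sum _ _ _ fun i _ ↦ h i i.2 (e i) (e i).2

theorem Finset.sum_sub_succ_eq_sdiff {M : Type*} [AddCommGroup M] (A : Finset ℕ) (f : ℕ → M) :
    ∑ i ∈ A, (f i - f (i + 1)) =
      ∑ i ∈ A \ A.image (· + 1), f i - ∑ j ∈ A.image (· + 1) \ A, f j := by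
  rw [sum_sub_distrib, ← sum_image (f := f) (g := (· + 1)) (by simp), sum_sdiff_sub_sum_sdiff]

theorem Finset.card_sdiff_image_succ (A : Finset ℕ) :
    #(A \ A.image (· + 1)) = #(A.image (· + 1) \ A) :=
  card_sdiff_comm (card_image_of_injective _ (add_left_injective 1)).symm

theorem Finset.min'_mem_sdiff_image_succ {A : Finset ℕ} (hA : A.Nonempty) :
    A.min' hA ∈ A \ A.image (· + 1) := by
  refine mem_sdiff.2 ⟨A.min'_mem hA, fun hmem ↦ ?_⟩
  obtain ⟨j, hj, hje⟩ := mem_image.1 hmem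
  have := A.min'_le j hj
  omega

section Permutation

variable {n : ℕ} (σ : Equiv.Perm (Fin n))

theorem one_le_sval_iff {i : ℕ} : 1 ≤ sval σ i ↔ 1 ≤ i ∧ i ≤ n := by
  unfold sval; split <;> simp_all

theorem sval_le (i : ℕ) : sval σ i ≤ n := by
  unfold sval; split
  · have := (σ ⟨i - 1, by omega⟩).isLt; omega
  · omega

@[simp]
theorem sbar_zero : sbar σ 0 = 0 := by simp [sbar]

theorem sbar_succ_s11 (i : ℕ) : sbar σ (i + 1) = sval σ i := by
  unfold sbar sval
  by_cases h : 1 ≤ i ∧ i ≤ n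
  · rw [dif_pos ⟨by omega, by omega⟩, dif_pos h]
    congr 2
  · rw [dif_neg (by omega), dif_neg h]

theorem sval_pinv {l : ℕ} (h1 : 1 ≤ l) (h2 : l ≤ n) : sval σ (pinv σ l) = l := by
  have hlt := (σ.symm ⟨l - 1, by omega⟩).isLt
  rw [pinv, dif_pos ⟨h1, h2⟩, sval, dif_pos ⟨by omega, by omega⟩]
  simp only [Nat.add_sub_cancel, Fin.eta, Equiv.apply_symm_apply]
  omega

theorem pinv_sval {i : ℕ} (h1 : 1 ≤ i) (h2 : i ≤ n) : pinv σ (sval σ i) = i := by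
  have hlt := (σ ⟨i - 1, by omega⟩).isLt
  rw [sval, dif_pos ⟨h1, h2⟩, pinv, dif_pos ⟨by omega, by omega⟩]
  simp only [Nat.add_sub_cancel, Fin.eta, Equiv.symm_apply_apply]
  omega

def upperPositions (m : ℕ) : Finset ℕ := (Icc 1 n).filter (m ≤ sval σ ·)

variable {σ} {m : ℕ}

theorem mem_upperPositions (hm : 1 ≤ m) {i : ℕ} : i ∈ upperPositions σ m ↔ m ≤ sval σ i := by
  simp only [upperPositions, mem_filter, mem_Icc, and_iff_right_iff_imp]
  exact fun h ↦ (one_le_sval_iff σ).1 (hm.trans h)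

theorem mem_image_succ_upperPositions (hm : 1 ≤ m) {j : ℕ} :
    j ∈ (upperPositions σ m).image (· + 1) ↔ m ≤ sbar σ j := by
  cases j with
  | zero => simp only [sbar_zero, nonpos_iff_eq_zero, mem_image]; omega
  | succ i => simp [sbar_succ_s11, mem_upperPositions hm]

theorem Sless_eq_sdiff (hm : 1 ≤ m) :
    Sless σ m = upperPositions σ m \ (upperPositions σ m).image (· + 1) := by
  ext i
  have hsval := (one_le_sval_iff σ (i := i)).1
  simp only [Sless, mem_filter, mem_Icc, mem_sdiff, mem_upperPositions hm,
    mem_image_succ_upperPositions hm, sbar_succ_s11, not_le]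
  constructor
  · rintro ⟨-, hlt, hle⟩; exact ⟨hle, hlt⟩
  · rintro ⟨hle, hlt⟩
    have hi := hsval (hm.trans hle)
    exact ⟨⟨hi.1, by omega⟩, hlt, hle⟩

theorem QType_of_mem_Sless (hm : 1 ≤ m) {i : ℕ} (hi : i ∈ Sless σ m) : QType σ i := by
  rw [Sless_eq_sdiff hm, mem_sdiff, mem_upperPositions hm, mem_image_succ_upperPositions hm,
    not_le] at hi
  obtain ⟨hle, hlt⟩ := hi
  have hi := (one_le_sval_iff σ).1 (hm.trans hle)
  obtain rfl | hi2 := eq_or_lt_of_le hi.1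
  · exact Or.inl rfl
  · obtain ⟨j, rfl⟩ : ∃ j, i = j + 1 := ⟨i - 1, by omega⟩
    rw [sbar_succ_s11] at hlt
    exact Or.inr ⟨by omega, hi.2, by simpa using hlt.trans_le hle⟩

theorem PType_of_mem_sdiff (hm : 1 ≤ m) {j : ℕ}
    (hj : j ∈ (upperPositions σ m).image (· + 1) \ upperPositions σ m) : PType σ j := by
  rw [mem_sdiff, mem_upperPositions hm, mem_image_succ_upperPositions hm, not_le] at hj
  obtain ⟨hle, hlt⟩ := hj
  cases j with
  | zero => rw [sbar_zero] at hle; omega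
  | succ i =>
    rw [sbar_succ_s11] at hle
    have hi := (one_le_sval_iff σ).1 (hm.trans hle)
    obtain rfl | hi2 := eq_or_lt_of_le hi.2
    · exact Or.inl rfl
    · exact Or.inr ⟨by omega, hi2, by simpa using hlt.trans_le hle⟩

theorem sum_Icc_pinv_eq_sum_upperPositions {M : Type*} [AddCommMonoid M] (g : ℕ → M)
    (hm : 1 ≤ m) : ∑ l ∈ Icc m n, g (pinv σ l) = ∑ i ∈ upperPositions σ m, g i := by
  refine sum_nbij' (pinv σ) (sval σ) (fun l hl ↦ ?_) (fun i hi ↦ ?_) (fun l hl ↦ ?_)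
    (fun i hi ↦ ?_) fun _ _ ↦ rfl
  · simp only [Finset.mem_Icc, mem_upperPositions hm] at hl ⊢
    rw [sval_pinv σ (hm.trans hl.1) hl.2]; exact hl.1
  · simp only [Finset.mem_Icc, mem_upperPositions hm] at hi ⊢
    exact ⟨hi, sval_le σ i⟩
  · simp only [Finset.mem_Icc] at hl
    exact sval_pinv σ (hm.trans hl.1) hl.2
  · simp only [mem_upperPositions hm] at hi
    have := (one_le_sval_iff σ).1 (hm.trans hi)
    exact pinv_sval σ this.1 this.2

theorem card_Sless_nsmul_le_sum {M : Type*} [AddCommGroup M] [PartialOrder M]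
    [IsOrderedAddMonoid M] {F : ℕ → M} {δ : M}
    (hgap : ∀ i j, QType σ i → PType σ j → δ ≤ F i - F j) (hm : 1 ≤ m) :
    #(Sless σ m) • δ ≤ ∑ l ∈ Icc m n, (F (pinv σ l) - F (pinv σ l + 1)) := by
  rw [sum_Icc_pinv_eq_sum_upperPositions (fun i ↦ F i - F (i + 1)) hm, sum_sub_succ_eq_sdiff,
    ← Sless_eq_sdiff hm]
  refine card_nsmul_le_sum_sub_sum ?_ fun i hi j hj ↦
    hgap i j (QType_of_mem_Sless hm hi) (PType_of_mem_sdiff hm hj)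
  rw [Sless_eq_sdiff hm, card_sdiff_image_succ]

theorem Sless_nonempty (hm : 1 ≤ m) (hmn : m ≤ n) : (Sless σ m).Nonempty := by
  have hU : (upperPositions σ m).Nonempty :=
    ⟨pinv σ m, (mem_upperPositions hm).2 (sval_pinv σ hm hmn).ge⟩
  exact Sless_eq_sdiff hm ▸ ⟨_, min'_mem_sdiff_image_succ hU⟩

end Permutation

theorem Xsigma_lower_bound_general {n : ℕ} (σ : Equiv.Perm (Fin n)) (δ ε : ℝ)
    (hδ : 0 < δ) (F : ℕ → ℝ)
    (hgap : ∀ i j, QType σ i → PType σ j → δ ≤ F i - F j)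
    (k : ℕ) (hk : 1 ≤ k) (hk' : k ≤ n) :
    let X : ℂ := (k : ℂ) * (ε : ℂ) +
      Complex.I * ∑ l ∈ Finset.Icc (n - k + 1) n,
        ((F (pinv σ l) : ℂ) - (F (pinv σ l + 1) : ℂ))
    (k : ℝ) ^ 2 * ε ^ 2 + ((Sless σ (n - k + 1)).card : ℝ) ^ 2 * δ ^ 2
        ≤ ‖X‖ ^ 2 ∧
      δ ≤ ‖X‖ := by
  intro X
  set S := ∑ l ∈ Icc (n - k + 1) n, (F (pinv σ l) - F (pinv σ l + 1))
  have hX : ‖X‖ ^ 2 = (k * ε) ^ 2 + S ^ 2 := by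
    have : X = ((k * ε : ℝ) : ℂ) + (S : ℂ) * Complex.I := by
      simp only [X, S]; push_cast; ring
    rw [this, Complex.sq_norm, Complex.normSq_add_mul_I]
  have hS : #(Sless σ (n - k + 1)) * δ ≤ S := by
    simpa only [nsmul_eq_mul] using card_Sless_nsmul_le_sum hgap (m := n - k + 1) le_add_self
  have hcard : (1 : ℝ) ≤ #(Sless σ (n - k + 1)) :=
    mod_cast (Sless_nonempty le_add_self (by omega)).card_pos
  have hδS : δ ≤ S := by nlinarith
  refine ⟨?_, by nlinarith [norm_nonneg X]⟩
  rw [hX]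
  nlinarith [pow_le_pow_left₀ (by positivity) hS 2]

/-- If the energies satisfy the gap condition `F(i) − F(j) ≥ δ` for `i` Q-type and `j`
P-type, then `X_σ(k) = kε + i Σ_{l=n−k+1}^{n} (F(σ⁻¹(l)) − F(σ⁻¹(l)+1))` satisfies
`|X_σ(k)|² ≥ k²ε² + n_k²δ²`, where `n_k = |S^<_σ(n−k+1)|`; in particular
`|X_σ(k)| ≥ δ`. -/
theorem Xsigma_lower_bound {n : ℕ} (σ : Equiv.Perm (Fin n)) (δ ε : ℝ)
    (hδ : 0 < δ) (hε : 0 ≤ ε) (F : ℕ → ℝ)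
    (hgap : ∀ i j, QType σ i → PType σ j → δ ≤ F i - F j)
    (k : ℕ) (hk : 1 ≤ k) (hk' : k ≤ n) :
    let X : ℂ := (k : ℂ) * (ε : ℂ) +
      Complex.I * ∑ l ∈ Finset.Icc (n - k + 1) n,
        ((F (pinv σ l) : ℂ) - (F (pinv σ l + 1) : ℂ))
    (k : ℝ) ^ 2 * ε ^ 2 + ((Sless σ (n - k + 1)).card : ℝ) ^ 2 * δ ^ 2
        ≤ ‖X‖ ^ 2 ∧
      δ ≤ ‖X‖ :=
  Xsigma_lower_bound_general σ δ ε hδ F hgap k hk hk'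
end

section
/- The bilinear product ∗ on the free ℤ-module spanned by trees, defined by | ∗ T = T ∗ | = T for every tree T and (T₁ ∨ T₂) ∗ (U₁ ∨ U₂) = ((T₁ ∨ T₂) ∗ U₁) ∨ U₂ + T₁ ∨ (T₂ ∗ (U₁ ∨ U₂)) (with ∨ extended bilinearly), is associative: (x ∗ y) ∗ z = x ∗ (y ∗ z) for all elements x, y, z of the free ℤ-module spanned by trees. -/
/-- The bilinear extension of the grafting `∨` to the free `ℤ`-module spanned by trees. -/
noncomputable def vee (x y : Tree Unit →₀ ℤ) : Tree Unit →₀ ℤ :=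
  x.sum fun T a => y.sum fun U b => Finsupp.single (BinaryTree.node () T U) (a * b)

/-- The convolution product of two trees, with values in the free `ℤ`-module spanned by
trees: `| ∗ T = T ∗ | = T` and
`(T₁ ∨ T₂) ∗ (U₁ ∨ U₂) = ((T₁ ∨ T₂) ∗ U₁) ∨ U₂ + T₁ ∨ (T₂ ∗ (U₁ ∨ U₂))`. -/
noncomputable def starT : Tree Unit → Tree Unit → (Tree Unit →₀ ℤ)
  | BinaryTree.nil, T => Finsupp.single T 1
  | T, BinaryTree.nil => Finsupp.single T 1
  | BinaryTree.node _ T₁ T₂, BinaryTree.node _ U₁ U₂ =>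
      vee (starT (BinaryTree.node () T₁ T₂) U₁) (Finsupp.single U₂ 1) +
        vee (Finsupp.single T₁ 1) (starT T₂ (BinaryTree.node () U₁ U₂))
termination_by x y => (x.numNodes, y.numNodes)
decreasing_by
  · simp [Prod.lex_iff, BinaryTree.numNodes] <;> omega
  · simp [Prod.lex_iff, BinaryTree.numNodes] <;> omega

/-- The bilinear extension of the convolution product `∗` of trees to the free
`ℤ`-module spanned by trees. -/
noncomputable def star (x y : Tree Unit →₀ ℤ) : Tree Unit →₀ ℤ :=
  x.sum fun T a => y.sum fun U b => (a * b) • starT T U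

/-! The two sides are trilinear, so it suffices to prove associativity on three trees `T`, `U`, `V`,
by induction on their total number of nodes. If one of them is `|` this is the unit law.
Otherwise, by bilinearity the defining recursion holds for `(x₁ ∨ x₂) ∗ V` and `T ∗ (y₁ ∨ y₂)` with
arbitrary `x₁, x₂, y₁, y₂`, and expanding both sides with it gives
`((T ∗ U) ∗ V₁) ∨ V₂ + (T ∗ U₁) ∨ (U₂ ∗ V) + T₁ ∨ ((T₂ ∗ U) ∗ V)` and the same sum with the
brackets of the two triple products moved to the right; the triples `(T, U, V₁)` and `(T₂, U, V)`
are smaller. -/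

open Finsupp

namespace Finsupp

variable {R α β M : Type*} [CommSemiring R] [AddCommMonoid M] [Module R M]

noncomputable def linearCombination₂ (f : α → β → M) : (α →₀ R) →ₗ[R] (β →₀ R) →ₗ[R] M :=
  linearCombination R fun a => linearCombination R (f a)

theorem linearCombination₂_apply (f : α → β → M) (x : α →₀ R) (y : β →₀ R) :
    linearCombination₂ f x y = x.sum fun a r => y.sum fun b s => (r * s) • f a b := by
  simp [linearCombination₂, linearCombination_apply, Finsupp.smul_sum, mul_smul]

@[simp]
theorem linearCombination₂_single (f : α → β → M) (a : α) (b : β) :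
    linearCombination₂ f (single a (1 : R)) (single b 1) = f a b := by
  simp [linearCombination₂]

end Finsupp

noncomputable def veeₗ :
    (BinaryTree Unit →₀ ℤ) →ₗ[ℤ] (BinaryTree Unit →₀ ℤ) →ₗ[ℤ] BinaryTree Unit →₀ ℤ :=
  linearCombination₂ fun T U => single (.node () T U) 1

noncomputable def starₗ :
    (BinaryTree Unit →₀ ℤ) →ₗ[ℤ] (BinaryTree Unit →₀ ℤ) →ₗ[ℤ] BinaryTree Unit →₀ ℤ :=
  linearCombination₂ starT

-- `⋎` is the grafting `∨` of the paper, `∨` being taken by `Or`.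
local infixl:70 " ∗ " => starₗ
local infixl:67 " ⋎ " => veeₗ

theorem vee_eq_veeₗ (x y : BinaryTree Unit →₀ ℤ) : vee x y = x ⋎ y := by
  simp [vee, veeₗ, linearCombination₂_apply, smul_single]

theorem star_eq_starₗ (x y : BinaryTree Unit →₀ ℤ) : star x y = x ∗ y :=
  (linearCombination₂_apply starT x y).symm

@[simp]
theorem veeₗ_single (T U : BinaryTree Unit) :
    single T 1 ⋎ single U 1 = single (.node () T U) 1 :=
  linearCombination₂_single _ T U

@[simp]
theorem starₗ_single (T U : BinaryTree Unit) : single T 1 ∗ single U 1 = starT T U :=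
  linearCombination₂_single _ T U

theorem starT_node_node (T₁ T₂ U₁ U₂ : BinaryTree Unit) :
    starT (.node () T₁ T₂) (.node () U₁ U₂) =
      starT (.node () T₁ T₂) U₁ ⋎ single U₂ 1 + single T₁ 1 ⋎ starT T₂ (.node () U₁ U₂) := by
  rw [starT, vee_eq_veeₗ, vee_eq_veeₗ]

theorem starₗ_single_nil_left (x : BinaryTree Unit →₀ ℤ) : single .nil 1 ∗ x = x := by
  have h : starₗ (single .nil 1) = LinearMap.id := by
    ext U
    simp [starT]
  exact congr($h x)

theorem starₗ_single_nil_right (x : BinaryTree Unit →₀ ℤ) : x ∗ single .nil 1 = x := by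
  have h : starₗ.flip (single .nil 1) = LinearMap.id := by
    ext T
    cases T <;> simp [starT]
  exact congr($h x)

theorem starₗ_veeₗ_single_node (x₁ x₂ : BinaryTree Unit →₀ ℤ) (V₁ V₂ : BinaryTree Unit) :
    (x₁ ⋎ x₂) ∗ single (.node () V₁ V₂) 1 =
      (x₁ ⋎ x₂) ∗ single V₁ 1 ⋎ single V₂ 1 + x₁ ⋎ x₂ ∗ single (.node () V₁ V₂) 1 := by
  have h : veeₗ.compr₂ (starₗ.flip (single (.node () V₁ V₂) 1)) =
      veeₗ.compr₂ (veeₗ.flip (single V₂ 1) ∘ₗ starₗ.flip (single V₁ 1)) +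
        veeₗ.compl₂ (starₗ.flip (single (.node () V₁ V₂) 1)) := by
    ext T₁ T₂
    simp [starT_node_node]
  exact congr($h x₁ x₂)

theorem starₗ_single_node_veeₗ (T₁ T₂ : BinaryTree Unit) (y₁ y₂ : BinaryTree Unit →₀ ℤ) :
    single (.node () T₁ T₂) 1 ∗ (y₁ ⋎ y₂) =
      single (.node () T₁ T₂) 1 ∗ y₁ ⋎ y₂ + single T₁ 1 ⋎ single T₂ 1 ∗ (y₁ ⋎ y₂) := by
  have h : veeₗ.compr₂ (starₗ (single (.node () T₁ T₂) 1)) =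
      veeₗ ∘ₗ starₗ (single (.node () T₁ T₂) 1) +
        veeₗ.compr₂ (veeₗ (single T₁ 1) ∘ₗ starₗ (single T₂ 1)) := by
    ext U₁ U₂
    simp [starT_node_node]
  exact congr($h y₁ y₂)

theorem starₗ_assoc_single :
    ∀ T U V : BinaryTree Unit,
      single T 1 ∗ single U 1 ∗ single V 1 = single T 1 ∗ (single U 1 ∗ single V 1)
  | .nil, U, V => by rw [starₗ_single_nil_left, starₗ_single_nil_left]
  | T, .nil, V => by rw [starₗ_single_nil_left, starₗ_single_nil_right]
  | T, U, .nil => by rw [starₗ_single_nil_right, starₗ_single_nil_right]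
  | .node () T₁ T₂, .node () U₁ U₂, .node () V₁ V₂ => by
    set T : BinaryTree Unit := .node () T₁ T₂
    set U : BinaryTree Unit := .node () U₁ U₂
    set V : BinaryTree Unit := .node () V₁ V₂
    have hTU : single T 1 ∗ single U 1 =
        single T 1 ∗ single U₁ 1 ⋎ single U₂ 1 + single T₁ 1 ⋎ single T₂ 1 ∗ single U 1 := by
      simp only [starₗ_single, T, U, starT_node_node]
    have hUV : single U 1 ∗ single V 1 =
        single U 1 ∗ single V₁ 1 ⋎ single V₂ 1 + single U₁ 1 ⋎ single U₂ 1 ∗ single V 1 := by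
      simp only [starₗ_single, U, V, starT_node_node]
    calc single T 1 ∗ single U 1 ∗ single V 1
        = single T 1 ∗ single U 1 ∗ single V₁ 1 ⋎ single V₂ 1
          + single T 1 ∗ single U₁ 1 ⋎ single U₂ 1 ∗ single V 1
          + single T₁ 1 ⋎ single T₂ 1 ∗ single U 1 ∗ single V 1 := by
          simp only [hTU, map_add, LinearMap.add_apply, V, starₗ_veeₗ_single_node]
          abel
      _ = single T 1 ∗ (single U 1 ∗ single V₁ 1) ⋎ single V₂ 1
          + single T 1 ∗ single U₁ 1 ⋎ single U₂ 1 ∗ single V 1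
          + single T₁ 1 ⋎ single T₂ 1 ∗ (single U 1 ∗ single V 1) := by
          rw [starₗ_assoc_single T U V₁, starₗ_assoc_single T₂ U V]
      _ = single T 1 ∗ (single U 1 ∗ single V 1) := by
          rw [hUV]
          simp only [map_add, T, starₗ_single_node_veeₗ]
          abel
termination_by T U V => T.numNodes + U.numNodes + V.numNodes

theorem starₗ_assoc (x y z : BinaryTree Unit →₀ ℤ) : x ∗ y ∗ z = x ∗ (y ∗ z) := by
  have h : starₗ.compr₂ starₗ = ((LinearMap.llcomp ℤ _ _ _).comp starₗ).compl₂ starₗ := by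
    ext T U V : 6
    exact starₗ_assoc_single T U V
  exact congr($h x y z)

/-- The convolution product `∗` on the free `ℤ`-module spanned by trees is associative. -/
theorem star_assoc (x y z : Tree Unit →₀ ℤ) :
    star (star x y) z = star x (star y z) := by
  simp only [star_eq_starₗ, starₗ_assoc]
end
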